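/- arXiv:1903.03859 — 10 statements merged into one kernel-verified Lean document; each statement's English description precedes it below -/
import Mathlib

section
/- Let T0 > 0, D ≥ 0, α ∈ ℝ and C > 0. Let f : {−1, 0, 1} × [T0, ∞) → [0, ∞) be such that t ↦ f(j, t) is Lebesgue measurable for each j. Suppose that for all j ∈ {0, 1} and all T0 ≤ t1 ≤ t2 one has f(j, t2) + ∫_{t1}^{t2} f(j−1, t) dt ≤ C·(f(j, t1) + t1^{α+j}·D). Then there exists a constant C′ > 0, depending only on C and α, such that for all t ≥ 2·T0, f(0, t) ≤ C′·(t^{−1}·f(1, t/2) + t^{α}·D). -/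
open MeasureTheory Set

/-- Single-step pigeonhole lemma. -/
theorem single_step_pigeonhole (α C : ℝ) (hC : 0 < C) :
    ∃ C' > 0, ∀ (T0 D : ℝ), 0 < T0 → 0 ≤ D →
      ∀ f : ℤ → ℝ → ℝ,
      -- f takes values in [0,∞) on its domain
      (∀ j t, -1 ≤ j → j ≤ 1 → T0 ≤ t → 0 ≤ f j t) →
      -- f is Lebesgue measurable in the second variable
      (∀ j : ℤ, -1 ≤ j → j ≤ 1 → Measurable fun t : Set.Ici T0 => f j (t : ℝ)) →
      -- energy and Morawetz hierarchy
      (∀ j : ℤ, 0 ≤ j → j ≤ 1 → ∀ t1 t2, T0 ≤ t1 → t1 ≤ t2 →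
        ENNReal.ofReal (f j t2) + ∫⁻ t in Set.Icc t1 t2, ENNReal.ofReal (f (j - 1) t)
          ≤ ENNReal.ofReal (C * (f j t1 + t1 ^ (α + (j : ℝ)) * D))) →
      ∀ t, 2 * T0 ≤ t → f 0 t ≤ C' * (t⁻¹ * f 1 (t / 2) + t ^ α * D) := by
  refine ⟨(4 * C ^ 2 + C) * ((2 : ℝ) ^ |α| + 1), by positivity, ?_⟩
  intro T0 D hT0 hD f hpos hmeas hhier t ht
  have ht0 : 0 < t := by linarith
  have hhalf : T0 ≤ t / 2 := by linarith
  have hhalfpos : 0 < t / 2 := by linarith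
  have hf1 : 0 ≤ f 1 (t / 2) := hpos 1 (t / 2) (by norm_num) (by norm_num) hhalf
  set Mr : ℝ := C * (f 1 (t / 2) + (t / 2) ^ (α + 1) * D) with hMrdef
  have hMr0 : 0 ≤ Mr :=
    mul_nonneg hC.le (add_nonneg hf1 (mul_nonneg (Real.rpow_nonneg hhalfpos.le _) hD))
  -- integral bound from j = 1
  have hI := hhier 1 (by norm_num) le_rfl (t / 2) t hhalf (by linarith)
  norm_num at hI
  have hIle : (∫⁻ x in Icc (t / 2) t, ENNReal.ofReal (f 0 x)) ≤ ENNReal.ofReal Mr :=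
    le_trans le_add_self hI
  -- measurability
  have hmeas0 : AEMeasurable (fun s => ENNReal.ofReal (f 0 s))
      (volume.restrict (Icc (t / 2) t)) := by
    have h1 : AEMeasurable (fun s => ENNReal.ofReal (f 0 s)) (volume.restrict (Ici T0)) := by
      rw [aemeasurable_restrict_iff_comap_subtype measurableSet_Ici]
      exact ((hmeas 0 (by norm_num) (by norm_num)).ennreal_ofReal).aemeasurable
    exact h1.mono_measure
      (Measure.restrict_mono (fun x hx => le_trans hhalf hx.1) le_rfl)
  have hvol : volume (Icc (t / 2) t) = ENNReal.ofReal (t / 2) := by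
    rw [Real.volume_Icc]; ring_nf
  -- pigeonhole: find a good point s
  obtain ⟨s, hs, hfs⟩ : ∃ s ∈ Icc (t / 2) t, f 0 s ≤ 2 * Mr / (t / 2) := by
    by_cases hM : Mr = 0
    · have hI0 : (∫⁻ x in Icc (t / 2) t, ENNReal.ofReal (f 0 x)) = 0 :=
        le_antisymm (by simpa [hM] using hIle) zero_le
      have hae := (lintegral_eq_zero_iff' hmeas0).1 hI0
      have hne : (ae (volume.restrict (Icc (t / 2) t))).NeBot := by
        refine ae_neBot.2 fun h => ?_
        rw [Measure.restrict_eq_zero, hvol, ENNReal.ofReal_eq_zero] at h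
        linarith
      obtain ⟨x, hx0, hxmem⟩ := (hae.and (ae_restrict_mem measurableSet_Icc)).exists
      refine ⟨x, hxmem, ?_⟩
      have hx0' : f 0 x ≤ 0 := ENNReal.ofReal_eq_zero.1 hx0
      have : 0 ≤ 2 * Mr / (t / 2) := by positivity
      linarith
    · have hMpos : 0 < Mr := lt_of_le_of_ne hMr0 (Ne.symm hM)
      by_contra hcon
      push_neg at hcon
      have hle : ENNReal.ofReal (2 * Mr / (t / 2)) * volume (Icc (t / 2) t) ≤
          ∫⁻ x in Icc (t / 2) t, ENNReal.ofReal (f 0 x) := by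
        rw [← setLIntegral_const]
        exact setLIntegral_mono' measurableSet_Icc fun x hx =>
          ENNReal.ofReal_le_ofReal (hcon x hx).le
      rw [hvol, ← ENNReal.ofReal_mul (by positivity),
        div_mul_cancel₀ _ (ne_of_gt hhalfpos)] at hle
      have h2 : (2 : ℝ) * Mr ≤ Mr :=
        (ENNReal.ofReal_le_ofReal_iff hMr0).1 (le_trans hle hIle)
      linarith
  -- apply j = 0 hypothesis on [s, t]
  have hs1 : T0 ≤ s := le_trans hhalf hs.1
  have hfinal := hhier 0 le_rfl (by norm_num) s t hs1 hs.2
  norm_num at hfinal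
  have hof : ENNReal.ofReal (f 0 t) ≤ ENNReal.ofReal (C * (f 0 s + s ^ α * D)) :=
    le_trans le_add_self (by rwa [add_comm] at hfinal)
  have hs0 : 0 ≤ f 0 s := hpos 0 s (by norm_num) (by norm_num) hs1
  have hspos : 0 < s := lt_of_lt_of_le hhalfpos hs.1
  have hreal : f 0 t ≤ C * (f 0 s + s ^ α * D) := by
    have hrhs : 0 ≤ C * (f 0 s + s ^ α * D) :=
      mul_nonneg hC.le (add_nonneg hs0 (mul_nonneg (Real.rpow_nonneg hspos.le _) hD))
    exact (ENNReal.ofReal_le_ofReal_iff hrhs).1 hof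
  -- rpow estimates
  have hE1 : (1 : ℝ) ≤ 2 ^ |α| := Real.one_le_rpow one_le_two (abs_nonneg α)
  have hQ0 : 0 ≤ t ^ α := Real.rpow_nonneg ht0.le α
  have hPle : (t / 2) ^ α ≤ 2 ^ |α| * t ^ α := by
    rw [Real.div_rpow ht0.le (by norm_num : (0:ℝ) ≤ 2), div_eq_mul_inv,
      ← Real.rpow_neg (by norm_num : (0:ℝ) ≤ 2), mul_comm]
    have : (2 : ℝ) ^ (-α) ≤ 2 ^ |α| :=
      Real.rpow_le_rpow_of_exponent_le one_le_two (neg_le_abs α)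
    exact mul_le_mul_of_nonneg_right this hQ0
  have hsle : s ^ α ≤ 2 ^ |α| * t ^ α := by
    rcases le_or_gt 0 α with hα | hα
    · have h1 : s ^ α ≤ t ^ α := Real.rpow_le_rpow hspos.le hs.2 hα
      nlinarith [Real.rpow_nonneg hspos.le α]
    · have h1 : s ^ α ≤ (t / 2) ^ α :=
        Real.rpow_le_rpow_of_nonpos hhalfpos hs.1 hα.le
      linarith
  -- rewrite the pigeonhole bound
  have hPadd : (t / 2) ^ (α + 1) = (t / 2) ^ α * (t / 2) :=
    Real.rpow_add_one (ne_of_gt hhalfpos) α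
  have hfs' : f 0 s ≤ 4 * C * (f 1 (t / 2) * t⁻¹) + 2 * C * ((t / 2) ^ α * D) := by
    have : 2 * Mr / (t / 2) = 4 * C * (f 1 (t / 2) * t⁻¹) + 2 * C * ((t / 2) ^ α * D) := by
      rw [hMrdef, hPadd]
      field_simp
      ring
    linarith [hfs, this ▸ hfs]
  -- final arithmetic
  have hA : 0 ≤ f 1 (t / 2) * t⁻¹ := mul_nonneg hf1 (inv_nonneg.2 ht0.le)
  have hQD : 0 ≤ t ^ α * D := mul_nonneg hQ0 hD
  have hE0 : (0:ℝ) ≤ 2 ^ |α| := by linarith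
  nlinarith [hreal,
    mul_le_mul_of_nonneg_left hfs' hC.le,
    mul_le_mul_of_nonneg_left (mul_le_mul_of_nonneg_right hsle hD) hC.le,
    mul_le_mul_of_nonneg_left (mul_le_mul_of_nonneg_right hPle hD)
      (by positivity : (0:ℝ) ≤ 2 * C ^ 2),
    mul_nonneg (mul_nonneg (sq_nonneg C) hE0) hA,
    mul_nonneg (mul_nonneg hC.le hE0) hA,
    mul_nonneg hC.le hA,
    mul_nonneg (mul_nonneg (sq_nonneg C) hE0) hQD,
    mul_nonneg (sq_nonneg C) hQD,
    mul_nonneg hC.le hQD]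
end

section
/- For every α ∈ (−1, 1) there exists a constant C > 0, depending only on n and α, such that (∫_0^A ((f(x) − P_n(x)) / x^{n+1+α/2})² dx)^{1/2} ≤ C·(∫_0^A (x^{−α/2}·f^{(n+1)}(x))² dx)^{1/2}. -/
/-!
By the integral form of Taylor's theorem, `|f x - P_n x| ≤ x ^ n / n! * ∫₀ˣ |f⁽ⁿ⁺¹⁾|`, so the
estimate follows, with `C = 2 / (n! (1 + α))`, from the power-weighted Hardy inequality
`∫₀^∞ x ^ (-2 - α) (∫₀ˣ G) ^ 2 ≤ (2 / (1 + α)) ^ 2 ∫₀^∞ t ^ (-α) G ^ 2`, valid for `α > -1`.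
With `q = (1 - α) / 2`, Cauchy–Schwarz gives
`(∫₀ˣ G) ^ 2 ≤ (∫₀ˣ t ^ (-q)) (∫₀ˣ t ^ q G ^ 2) = (2 / (1 + α)) x ^ ((1 + α) / 2) ∫₀ˣ t ^ q G ^ 2`;
after swapping the integrals (Tonelli), the tail
`∫ₜ^∞ x ^ (-(3 + α) / 2) dx = (2 / (1 + α)) t ^ (-(1 + α) / 2)` restores the weight `t ^ (-α)`.
-/

open MeasureTheory Set
open scoped Nat ENNReal

theorem iteratedDerivWithin_Icc_of_subset {F : Type*} [NormedAddCommGroup F] [NormedSpace ℝ F]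
    {f : ℝ → F} {n k : ℕ} {a b c d t : ℝ} (hk : k ≤ n) (hf : ContDiffOn ℝ n f (Icc c d))
    (hab : a < b) (hsub : Icc a b ⊆ Icc c d) (ht : t ∈ Icc a b) :
    iteratedDerivWithin k f (Icc a b) t = iteratedDerivWithin k f (Icc c d) t := by
  have hcd : c < d :=
    (hsub (left_mem_Icc.2 hab.le)).1.trans_lt (hab.trans_le (hsub (right_mem_Icc.2 hab.le)).2)
  simp only [iteratedDerivWithin_eq_iteratedFDerivWithin]
  rw [iteratedFDerivWithin_subset hsub (uniqueDiffOn_Icc hab) (uniqueDiffOn_Icc hcd)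
    (hf.of_le (by exact_mod_cast hk)) ht]

theorem taylor_integral_remainder_Icc {F : Type*} [NormedAddCommGroup F] [NormedSpace ℝ F]
    [CompleteSpace F] {f : ℝ → F} {n : ℕ} {a b x : ℝ}
    (hf : ContDiffOn ℝ (n + 1) f (Icc a b)) (hx : x ∈ Ioc a b) :
    f x - taylorWithinEval f n (Icc a b) a x =
      ∫ t in a..x, ((x - t) ^ n / n !) • iteratedDerivWithin (n + 1) f (Icc a b) t := by
  have hsub : Icc a x ⊆ Icc a b := Icc_subset_Icc_right hx.2
  have hderiv : ∀ k ≤ n + 1, ∀ t ∈ Icc a x,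
      iteratedDerivWithin k f (Icc a x) t = iteratedDerivWithin k f (Icc a b) t :=
    fun k hk t ht => iteratedDerivWithin_Icc_of_subset hk hf hx.1 hsub ht
  have hrem := taylor_integral_remainder (n := n) (x₀ := a) (x := x)
    (hf.mono (by rwa [uIcc_of_le hx.1.le]))
  rw [uIcc_of_le hx.1.le] at hrem
  have htaylor : taylorWithinEval f n (Icc a x) a x = taylorWithinEval f n (Icc a b) a x := by
    simp only [taylor_within_apply]
    refine Finset.sum_congr rfl fun k hk => ?_
    rw [hderiv k ((Finset.mem_range_succ_iff.1 hk).trans n.le_succ) a (left_mem_Icc.2 hx.1.le)]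
  rw [← htaylor, hrem]
  refine intervalIntegral.integral_congr fun t ht => ?_
  rw [uIcc_of_le hx.1.le] at ht
  rw [hderiv (n + 1) le_rfl t ht]

theorem norm_taylor_remainder_Icc_le {F : Type*} [NormedAddCommGroup F] [NormedSpace ℝ F]
    [CompleteSpace F] {f : ℝ → F} {n : ℕ} {a b x : ℝ}
    (hf : ContDiffOn ℝ (n + 1) f (Icc a b)) (hx : x ∈ Ioc a b) :
    ‖f x - taylorWithinEval f n (Icc a b) a x‖ ≤
      (x - a) ^ n / n ! * ∫ t in Ioo a x, ‖iteratedDerivWithin (n + 1) f (Icc a b) t‖ := by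
  have hg : ContinuousOn (iteratedDerivWithin (n + 1) f (Icc a b)) (Icc a x) :=
    (hf.continuousOn_iteratedDerivWithin le_rfl (uniqueDiffOn_Icc (hx.1.trans_le hx.2))).mono
      (Icc_subset_Icc_right hx.2)
  rw [taylor_integral_remainder_Icc hf hx, ← integral_const_mul, ← integral_Ioc_eq_integral_Ioo,
    ← intervalIntegral.integral_of_le hx.1.le]
  refine intervalIntegral.norm_integral_le_of_norm_le hx.1.le
    (Filter.Eventually.of_forall fun t ht => ?_) ?_
  · have hxt : 0 ≤ x - t := sub_nonneg.2 ht.2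
    rw [norm_smul, Real.norm_of_nonneg (by positivity)]
    gcongr
    exact ht.1.le
  · exact (continuousOn_const.mul hg.norm).intervalIntegrable_of_Icc hx.1.le

theorem taylorWithinEval_eq_sum (f : ℝ → ℝ) (n : ℕ) (s : Set ℝ) (x₀ x : ℝ) :
    taylorWithinEval f n s x₀ x =
      ∑ k ∈ Finset.range (n + 1), (x - x₀) ^ k / k ! * iteratedDerivWithin k f s x₀ := by
  rw [taylor_within_apply]
  refine Finset.sum_congr rfl fun k _ => ?_
  rw [smul_eq_mul]
  ring

theorem sq_taylor_remainder_div_rpow_le {n : ℕ} {α A x : ℝ} {f : ℝ → ℝ}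
    (hf : ContDiffOn ℝ (n + 1) f (Icc 0 A)) (hx : x ∈ Ioc 0 A) :
    ENNReal.ofReal (((f x - taylorWithinEval f n (Icc 0 A) 0 x) / x ^ ((n : ℝ) + 1 + α / 2)) ^ 2)
      ≤ ENNReal.ofReal ((n ! : ℝ)⁻¹ ^ 2) * (ENNReal.ofReal (x ^ (-2 - α)) *
        (∫⁻ t in Ioo 0 x, ‖iteratedDerivWithin (n + 1) f (Icc 0 A) t‖ₑ) ^ 2) := by
  set g := iteratedDerivWithin (n + 1) f (Icc 0 A)
  set R := ∫ t in Ioo 0 x, ‖g t‖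
  have hR : 0 ≤ R := integral_nonneg fun _ => norm_nonneg _
  have hg : IntegrableOn g (Ioo 0 x) :=
    ((hf.continuousOn_iteratedDerivWithin le_rfl (uniqueDiffOn_Icc (hx.1.trans_le hx.2))).mono
      (Icc_subset_Icc_right hx.2)).integrableOn_Icc.mono_set Ioo_subset_Icc_self
  have hrem : ‖f x - taylorWithinEval f n (Icc 0 A) 0 x‖ ≤ x ^ n / n ! * R := by
    simpa only [sub_zero] using norm_taylor_remainder_Icc_le hf hx
  have hpow : (x ^ n / x ^ ((n : ℝ) + 1 + α / 2)) ^ 2 = x ^ (-2 - α) := by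
    rw [← Real.rpow_natCast x n, ← Real.rpow_sub hx.1, ← Real.rpow_natCast, ← Real.rpow_mul hx.1.le]
    ring_nf
  have hreal : ((f x - taylorWithinEval f n (Icc 0 A) 0 x) / x ^ ((n : ℝ) + 1 + α / 2)) ^ 2 ≤
      (n ! : ℝ)⁻¹ ^ 2 * (x ^ (-2 - α) * R ^ 2) := by
    rw [div_pow, ← sq_abs, ← Real.norm_eq_abs, ← hpow]
    calc ‖f x - taylorWithinEval f n (Icc 0 A) 0 x‖ ^ 2 / (x ^ ((n : ℝ) + 1 + α / 2)) ^ 2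
        ≤ (x ^ n / n ! * R) ^ 2 / (x ^ ((n : ℝ) + 1 + α / 2)) ^ 2 := by gcongr
      _ = _ := by ring
  rw [← ofReal_integral_norm_eq_lintegral_enorm hg, ← ENNReal.ofReal_pow hR,
    ← ENNReal.ofReal_mul (Real.rpow_nonneg hx.1.le _), ← ENNReal.ofReal_mul (by positivity)]
  exact ENNReal.ofReal_le_ofReal hreal

theorem ofReal_rpow_mul_ofReal_rpow {x : ℝ} (hx : 0 < x) (p q : ℝ) :
    ENNReal.ofReal (x ^ p) * ENNReal.ofReal (x ^ q) = ENNReal.ofReal (x ^ (p + q)) := by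
  rw [← ENNReal.ofReal_mul (by positivity), Real.rpow_add hx]

theorem lintegral_Ioo_zero_rpow {x p : ℝ} (hx : 0 < x) (hp : -1 < p) :
    ∫⁻ t in Ioo 0 x, ENNReal.ofReal (t ^ p) = ENNReal.ofReal (x ^ (p + 1) / (p + 1)) := by
  have hint : IntegrableOn (fun t : ℝ => t ^ p) (Ioo 0 x) :=
    (intervalIntegrable_iff_integrableOn_Ioo_of_le hx.le).1
      (intervalIntegral.intervalIntegrable_rpow' hp)
  rw [← ofReal_integral_eq_lintegral_ofReal hint, ← integral_Ioc_eq_integral_Ioo,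
    ← intervalIntegral.integral_of_le hx.le, integral_rpow (Or.inl hp),
    Real.zero_rpow (by linarith), sub_zero]
  filter_upwards [ae_restrict_mem measurableSet_Ioo] with t ht using Real.rpow_nonneg ht.1.le _

theorem lintegral_Ioi_rpow {t p : ℝ} (ht : 0 < t) (hp : p < -1) :
    ∫⁻ x in Ioi t, ENNReal.ofReal (x ^ p) = ENNReal.ofReal (-t ^ (p + 1) / (p + 1)) := by
  rw [← ofReal_integral_eq_lintegral_ofReal (integrableOn_Ioi_rpow_of_lt hp ht),
    integral_Ioi_rpow_of_lt hp ht]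
  filter_upwards [ae_restrict_mem measurableSet_Ioi] with x hx
  exact Real.rpow_nonneg (ht.trans hx).le _

theorem sq_lintegral_mul_le {X : Type*} [MeasurableSpace X] {μ : Measure X} {F G : X → ℝ≥0∞}
    (hF : AEMeasurable F μ) (hG : AEMeasurable G μ) :
    (∫⁻ t, F t * G t ∂μ) ^ 2 ≤ (∫⁻ t, F t ^ 2 ∂μ) * ∫⁻ t, G t ^ 2 ∂μ := by
  have h := ENNReal.lintegral_mul_le_Lp_mul_Lq μ Real.HolderConjugate.two_two hF hG
  simp only [Pi.mul_apply, ENNReal.rpow_two] at h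
  calc (∫⁻ t, F t * G t ∂μ) ^ 2
      ≤ ((∫⁻ t, F t ^ 2 ∂μ) ^ (2⁻¹ : ℝ) * (∫⁻ t, G t ^ 2 ∂μ) ^ (2⁻¹ : ℝ)) ^ 2 := by
        gcongr
        simpa only [one_div] using h
    _ = (∫⁻ t, F t ^ 2 ∂μ) * ∫⁻ t, G t ^ 2 ∂μ := by
        rw [mul_pow, ← ENNReal.rpow_two, ← ENNReal.rpow_two, ← ENNReal.rpow_mul,
          ← ENNReal.rpow_mul]
        norm_num

theorem sq_lintegral_Ioo_zero_le {x q : ℝ} (hx : 0 < x) (hq : q < 1) {G : ℝ → ℝ≥0∞}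
    (hG : AEMeasurable G (volume.restrict (Ioo 0 x))) :
    (∫⁻ t in Ioo 0 x, G t) ^ 2 ≤
      ENNReal.ofReal (x ^ (1 - q) / (1 - q)) *
        ∫⁻ t in Ioo 0 x, ENNReal.ofReal (t ^ q) * G t ^ 2 := by
  have hsplit : ∫⁻ t in Ioo 0 x, G t =
      ∫⁻ t in Ioo 0 x, ENNReal.ofReal (t ^ (-q / 2)) * (ENNReal.ofReal (t ^ (q / 2)) * G t) := by
    refine setLIntegral_congr_fun measurableSet_Ioo fun t ht => ?_
    rw [← mul_assoc, ofReal_rpow_mul_ofReal_rpow ht.1, neg_div, neg_add_cancel, Real.rpow_zero,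
      ENNReal.ofReal_one, one_mul]
  have hsq : ∀ p : ℝ, ∀ t ∈ Ioo (0 : ℝ) x,
      ENNReal.ofReal (t ^ (p / 2)) ^ 2 = ENNReal.ofReal (t ^ p) := by
    intro p t ht
    rw [sq, ofReal_rpow_mul_ofReal_rpow ht.1, add_halves]
  have hmeas : ∀ p : ℝ,
      AEMeasurable (fun t : ℝ => ENNReal.ofReal (t ^ p)) (volume.restrict (Ioo 0 x)) :=
    fun p => (measurable_id.pow_const p).ennreal_ofReal.aemeasurable
  calc (∫⁻ t in Ioo 0 x, G t) ^ 2
      ≤ (∫⁻ t in Ioo 0 x, ENNReal.ofReal (t ^ (-q / 2)) ^ 2) *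
          ∫⁻ t in Ioo 0 x, (ENNReal.ofReal (t ^ (q / 2)) * G t) ^ 2 := by
        rw [hsplit]
        exact sq_lintegral_mul_le (hmeas _) ((hmeas _).mul hG)
    _ = ENNReal.ofReal (x ^ (1 - q) / (1 - q)) *
          ∫⁻ t in Ioo 0 x, ENNReal.ofReal (t ^ q) * G t ^ 2 := by
        rw [setLIntegral_congr_fun measurableSet_Ioo fun t ht => hsq (-q) t ht,
          lintegral_Ioo_zero_rpow hx (by linarith), neg_add_eq_sub]
        congr 1
        refine setLIntegral_congr_fun measurableSet_Ioo fun t ht => ?_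
        rw [mul_pow, hsq q t ht]

theorem lintegral_Ioi_mul_lintegral_Ioo {a : ℝ} {F H : ℝ → ℝ≥0∞} (hF : Measurable F)
    (hH : AEMeasurable H (volume.restrict (Ioi a))) :
    ∫⁻ x in Ioi a, F x * ∫⁻ t in Ioo a x, H t = ∫⁻ t in Ioi a, H t * ∫⁻ x in Ioi t, F x := by
  set K : ℝ × ℝ → ℝ≥0∞ := {p | p.2 < p.1}.indicator fun p => F p.1 * H p.2
  have hK : AEMeasurable K ((volume.restrict (Ioi a)).prod (volume.restrict (Ioi a))) :=
    (hF.aemeasurable.comp_fst.mul hH.comp_snd).indicator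
      (measurableSet_lt measurable_snd measurable_fst)
  calc ∫⁻ x in Ioi a, F x * ∫⁻ t in Ioo a x, H t
      = ∫⁻ x in Ioi a, ∫⁻ t in Ioi a, K (x, t) := by
        refine lintegral_congr fun x => ?_
        change _ = ∫⁻ t in Ioi a, (Iio x).indicator (fun t => F x * H t) t
        rw [lintegral_indicator measurableSet_Iio, Measure.restrict_restrict measurableSet_Iio,
          inter_comm, Ioi_inter_Iio, lintegral_const_mul'' _ (hH.mono_set Ioo_subset_Ioi_self)]
    _ = ∫⁻ t in Ioi a, ∫⁻ x in Ioi a, K (x, t) := lintegral_lintegral_swap hK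
    _ = ∫⁻ t in Ioi a, H t * ∫⁻ x in Ioi t, F x := by
        refine setLIntegral_congr_fun measurableSet_Ioi fun t ht => ?_
        change ∫⁻ x in Ioi a, (Ioi t).indicator (fun x => F x * H t) x = _
        rw [lintegral_indicator measurableSet_Ioi, Measure.restrict_restrict measurableSet_Ioi,
          inter_eq_left.2 (Ioi_subset_Ioi (le_of_lt ht)), lintegral_mul_const _ hF, mul_comm]

theorem weighted_hardy_inequality {α : ℝ} (hα : -1 < α) {G : ℝ → ℝ≥0∞}
    (hG : AEMeasurable G (volume.restrict (Ioi 0))) :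
    ∫⁻ x in Ioi 0, ENNReal.ofReal (x ^ (-2 - α)) * (∫⁻ t in Ioo 0 x, G t) ^ 2 ≤
      ENNReal.ofReal ((2 / (1 + α)) ^ 2) * ∫⁻ t in Ioi 0, ENNReal.ofReal (t ^ (-α)) * G t ^ 2 := by
  obtain ⟨β, hβ, rfl⟩ : ∃ β : ℝ, 0 < β ∧ α = 2 * β - 1 := ⟨(1 + α) / 2, by linarith, by ring⟩
  have hweight : Measurable fun x : ℝ => ENNReal.ofReal (x ^ (-1 - β)) :=
    (measurable_id.pow_const _).ennreal_ofReal
  set K : ℝ → ℝ≥0∞ := fun x => ∫⁻ t in Ioo 0 x, ENNReal.ofReal (t ^ (1 - β)) * G t ^ 2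
  calc ∫⁻ x in Ioi 0, ENNReal.ofReal (x ^ (-2 - (2 * β - 1))) * (∫⁻ t in Ioo 0 x, G t) ^ 2
      ≤ ∫⁻ x in Ioi 0, ENNReal.ofReal β⁻¹ * (ENNReal.ofReal (x ^ (-1 - β)) * K x) := by
        refine setLIntegral_mono' measurableSet_Ioi fun x (hx : 0 < x) => ?_
        have hCS := sq_lintegral_Ioo_zero_le hx (by linarith : 1 - β < 1)
          (hG.mono_set Ioo_subset_Ioi_self)
        rw [sub_sub_cancel, div_eq_inv_mul, ENNReal.ofReal_mul (by positivity)] at hCS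
        calc _ ≤ ENNReal.ofReal (x ^ (-2 - (2 * β - 1))) *
              (ENNReal.ofReal β⁻¹ * ENNReal.ofReal (x ^ β) * K x) := by gcongr
          _ = ENNReal.ofReal β⁻¹ *
              (ENNReal.ofReal (x ^ (-2 - (2 * β - 1))) * ENNReal.ofReal (x ^ β) * K x) := by ring
          _ = _ := by rw [ofReal_rpow_mul_ofReal_rpow hx]; ring_nf
    _ = ENNReal.ofReal β⁻¹ *
          ∫⁻ t in Ioi 0, ENNReal.ofReal (t ^ (1 - β)) * G t ^ 2 *
            ∫⁻ x in Ioi t, ENNReal.ofReal (x ^ (-1 - β)) := by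
        have hH : AEMeasurable (fun t : ℝ => ENNReal.ofReal (t ^ (1 - β)) * G t ^ 2)
            (volume.restrict (Ioi 0)) :=
          (measurable_id.pow_const _).ennreal_ofReal.aemeasurable.mul (hG.pow_const 2)
        rw [lintegral_const_mul' _ _ ENNReal.ofReal_ne_top,
          lintegral_Ioi_mul_lintegral_Ioo hweight hH]
    _ = ENNReal.ofReal β⁻¹ *
          ∫⁻ t in Ioi 0, ENNReal.ofReal β⁻¹ * (ENNReal.ofReal (t ^ (-(2 * β - 1))) * G t ^ 2) := by
        congr 1
        refine setLIntegral_congr_fun measurableSet_Ioi fun t (ht : 0 < t) => ?_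
        rw [lintegral_Ioi_rpow ht (by linarith), show -1 - β + 1 = -β by ring, neg_div_neg_eq,
          div_eq_inv_mul, ENNReal.ofReal_mul (by positivity), mul_comm, mul_assoc,
          ← mul_assoc (ENNReal.ofReal (t ^ (-β))), ofReal_rpow_mul_ofReal_rpow ht]
        ring_nf
    _ = _ := by
        rw [lintegral_const_mul' _ _ ENNReal.ofReal_ne_top, ← mul_assoc,
          ← ENNReal.ofReal_mul (by positivity)]
        congr 2
        field_simp
        ring

theorem weighted_hardy_inequality_Ioo {α A : ℝ} (hα : -1 < α) {g : ℝ → ℝ}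
    (hg : AEMeasurable g (volume.restrict (Ioo 0 A))) :
    ∫⁻ x in Ioo 0 A, ENNReal.ofReal (x ^ (-2 - α)) * (∫⁻ t in Ioo 0 x, ‖g t‖ₑ) ^ 2 ≤
      ENNReal.ofReal ((2 / (1 + α)) ^ 2) *
        ∫⁻ t in Ioo 0 A, ENNReal.ofReal ((t ^ (-α / 2) * g t) ^ 2) := by
  set G : ℝ → ℝ≥0∞ := (Ioo 0 A).indicator fun t => ‖g t‖ₑ
  have hG : AEMeasurable G (volume.restrict (Ioi 0)) :=
    ((aemeasurable_indicator_iff measurableSet_Ioo).2 hg.enorm).restrict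
  have hinner : ∀ x ∈ Ioo (0 : ℝ) A, ∫⁻ t in Ioo 0 x, ‖g t‖ₑ = ∫⁻ t in Ioo 0 x, G t :=
    fun x hx => setLIntegral_congr_fun measurableSet_Ioo fun t (ht : t ∈ Ioo 0 x) =>
      (indicator_of_mem (mem_Ioo.2 ⟨ht.1, ht.2.trans hx.2⟩) fun t => ‖g t‖ₑ).symm
  have hindicator : ∀ t, ENNReal.ofReal (t ^ (-α)) * G t ^ 2 =
      (Ioo 0 A).indicator (fun t => ENNReal.ofReal (t ^ (-α)) * ‖g t‖ₑ ^ 2) t := by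
    intro t
    by_cases ht : t ∈ Ioo 0 A <;> simp [G, ht]
  have hrhs : ∫⁻ t in Ioi 0, ENNReal.ofReal (t ^ (-α)) * G t ^ 2 =
      ∫⁻ t in Ioo 0 A, ENNReal.ofReal ((t ^ (-α / 2) * g t) ^ 2) := by
    simp_rw [hindicator]
    rw [lintegral_indicator measurableSet_Ioo, Measure.restrict_restrict measurableSet_Ioo,
      inter_eq_left.2 Ioo_subset_Ioi_self]
    refine setLIntegral_congr_fun measurableSet_Ioo fun t (ht : t ∈ Ioo 0 A) => ?_
    rw [mul_pow, ← Real.rpow_natCast, ← Real.rpow_mul ht.1.le,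
      ENNReal.ofReal_mul (Real.rpow_nonneg ht.1.le _), Real.enorm_eq_ofReal_abs,
      ← ENNReal.ofReal_pow (abs_nonneg _), sq_abs]
    norm_num
  calc ∫⁻ x in Ioo 0 A, ENNReal.ofReal (x ^ (-2 - α)) * (∫⁻ t in Ioo 0 x, ‖g t‖ₑ) ^ 2
      = ∫⁻ x in Ioo 0 A, ENNReal.ofReal (x ^ (-2 - α)) * (∫⁻ t in Ioo 0 x, G t) ^ 2 :=
        setLIntegral_congr_fun measurableSet_Ioo fun x hx => by rw [hinner x hx]
    _ ≤ ∫⁻ x in Ioi 0, ENNReal.ofReal (x ^ (-2 - α)) * (∫⁻ t in Ioo 0 x, G t) ^ 2 :=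
        lintegral_mono_set Ioo_subset_Ioi_self
    _ ≤ _ := by
        rw [← hrhs]
        exact weighted_hardy_inequality hα hG

theorem rpow_one_half_le_ofReal_mul_of_le_sq_mul {I J : ℝ≥0∞} {C : ℝ} (hC : 0 ≤ C)
    (h : I ≤ ENNReal.ofReal (C ^ 2) * J) :
    I ^ (1 / 2 : ℝ) ≤ ENNReal.ofReal C * J ^ (1 / 2 : ℝ) := by
  calc I ^ (1 / 2 : ℝ) ≤ (ENNReal.ofReal (C ^ 2) * J) ^ (1 / 2 : ℝ) :=
        ENNReal.rpow_le_rpow h (by norm_num)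
    _ = ENNReal.ofReal C * J ^ (1 / 2 : ℝ) := by
        rw [ENNReal.mul_rpow_of_nonneg _ _ (by norm_num), ENNReal.ofReal_pow hC,
          ← ENNReal.rpow_natCast, ← ENNReal.rpow_mul]
        norm_num

/-- Taylor expansion in `L²`: weighted `L²` remainder estimate. -/
theorem taylor_L2_remainder (n : ℕ) (α : ℝ) (hα : α ∈ Set.Ioo (-1 : ℝ) 1) :
    ∃ C > 0, ∀ (A : ℝ), 0 < A → ∀ f : ℝ → ℝ,
      ContDiffOn ℝ (n + 1) f (Set.Icc 0 A) →
      (∫⁻ x in Set.Ioo (0 : ℝ) A,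
          ENNReal.ofReal (((f x - ∑ k ∈ Finset.range (n + 1),
              x ^ k / (k.factorial : ℝ) * iteratedDerivWithin k f (Set.Icc 0 A) 0)
            / x ^ ((n : ℝ) + 1 + α / 2)) ^ 2)) ^ (1 / 2 : ℝ)
        ≤ ENNReal.ofReal C *
          (∫⁻ x in Set.Ioo (0 : ℝ) A,
            ENNReal.ofReal ((x ^ (-α / 2) *
              iteratedDerivWithin (n + 1) f (Set.Icc 0 A) x) ^ 2)) ^ (1 / 2 : ℝ) := by
  have h1α : 0 < 1 + α := by linarith [hα.1]
  refine ⟨2 / (n ! * (1 + α)), by positivity, fun A hA f hf => ?_⟩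
  have hg : AEMeasurable (iteratedDerivWithin (n + 1) f (Icc 0 A)) (volume.restrict (Ioo 0 A)) :=
    ((hf.continuousOn_iteratedDerivWithin le_rfl (uniqueDiffOn_Icc hA)).mono
      Ioo_subset_Icc_self).aemeasurable measurableSet_Ioo
  refine rpow_one_half_le_ofReal_mul_of_le_sq_mul (by positivity) ?_
  calc _ ≤ ∫⁻ x in Ioo 0 A, ENNReal.ofReal ((n ! : ℝ)⁻¹ ^ 2) * (ENNReal.ofReal (x ^ (-2 - α)) *
          (∫⁻ t in Ioo 0 x, ‖iteratedDerivWithin (n + 1) f (Icc 0 A) t‖ₑ) ^ 2) :=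
        setLIntegral_mono' measurableSet_Ioo fun x hx => by
          simpa only [taylorWithinEval_eq_sum, sub_zero]
            using sq_taylor_remainder_div_rpow_le hf (Ioo_subset_Ioc_self hx)
    _ ≤ ENNReal.ofReal ((n ! : ℝ)⁻¹ ^ 2) * (ENNReal.ofReal ((2 / (1 + α)) ^ 2) *
          ∫⁻ x in Ioo 0 A, ENNReal.ofReal ((x ^ (-α / 2) *
            iteratedDerivWithin (n + 1) f (Icc 0 A) x) ^ 2)) := by
        rw [lintegral_const_mul' _ _ ENNReal.ofReal_ne_top]
        gcongr
        exact weighted_hardy_inequality_Ioo hα.1 hg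
    _ = _ := by
        rw [← mul_assoc, ← ENNReal.ofReal_mul (by positivity)]
        congr 2
        field_simp
end

section
/- For every integer i with 0 ≤ i ≤ n and every α ∈ (−1, 1) there exists a constant C > 0, depending only on n, i and α, such that ∫_0^A ((f − P_n)^{(i)}(x))² / x^{2n−2i+2+α} dx ≤ C·∫_0^A ((f − P_n)^{(i+1)}(x))² / x^{2n−2i+α} dx. -/
open MeasureTheory Set
open scoped ENNReal NNReal

lemma iterWithin_eq_iter {p : ℝ → ℝ} (hp : ContDiff ℝ ⊤ p)
    {s : Set ℝ} (hs : UniqueDiffOn ℝ s) (m : ℕ) :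
    Set.EqOn (iteratedDerivWithin m p s) (iteratedDeriv m p) s := by
  induction m with
  | zero => intro x _; simp [iteratedDerivWithin_zero, iteratedDeriv_zero]
  | succ m ih =>
    intro x hx
    rw [iteratedDerivWithin_succ, iteratedDeriv_succ,
      derivWithin_congr ih (ih hx)]
    exact ((hp.differentiable_iteratedDeriv m (by simp)) x).derivWithin
      (hs.uniqueDiffWithinAt hx)

lemma iterDeriv_add {a b : ℝ → ℝ} (ha : ContDiff ℝ ⊤ a) (hb : ContDiff ℝ ⊤ b) (m : ℕ) (x : ℝ) :
    iteratedDeriv m (fun y => a y + b y) x = iteratedDeriv m a x + iteratedDeriv m b x := by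
  simp only [← iteratedDerivWithin_univ]
  exact iteratedDerivWithin_add (mem_univ x) uniqueDiffOn_univ
    (ha.of_le le_top).contDiffWithinAt (hb.of_le le_top).contDiffWithinAt

lemma iterDeriv_sum (N m : ℕ) (F : ℕ → ℝ → ℝ) (hF : ∀ k, ContDiff ℝ ⊤ (F k)) (x : ℝ) :
    iteratedDeriv m (fun y => ∑ k ∈ Finset.range N, F k y) x
      = ∑ k ∈ Finset.range N, iteratedDeriv m (F k) x := by
  induction N with
  | zero =>
    simp only [Finset.range_zero, Finset.sum_empty]
    simp only [← iteratedDerivWithin_univ]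
    have := iteratedDerivWithin_const_mul (n := m) (f := fun _ : ℝ => (1:ℝ)) (mem_univ x)
      uniqueDiffOn_univ (0:ℝ) contDiff_const.contDiffWithinAt
    simpa using this
  | succ N ih =>
    have h : (fun y => ∑ k ∈ Finset.range (N+1), F k y)
        = fun y => (∑ k ∈ Finset.range N, F k y) + F N y := by
      funext y; rw [Finset.sum_range_succ]
    rw [h, iterDeriv_add (ContDiff.sum fun k _ => hF k) (hF N), ih, Finset.sum_range_succ]

lemma monomial_iterDeriv (k i : ℕ) (c : ℝ) :
    iteratedDeriv i (fun y : ℝ => y ^ k / (k.factorial : ℝ) * c) 0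
      = if k = i then c else 0 := by
  have h1 : (fun y : ℝ => y ^ k / (k.factorial:ℝ) * c)
      = fun y => (c / k.factorial) * y ^ k := by funext y; ring
  have h2 : iteratedDeriv i (fun y : ℝ => (c / k.factorial) * y ^ k) 0
      = (c / k.factorial) * iteratedDeriv i (fun y : ℝ => y ^ k) 0 := by
    simp only [← iteratedDerivWithin_univ]
    exact iteratedDerivWithin_const_mul (mem_univ 0) uniqueDiffOn_univ _
      (contDiff_id.pow k).contDiffWithinAt
  rw [h1, h2, iteratedDeriv_eq_iterate, iter_deriv_pow]
  rcases lt_trichotomy k i with h | h | h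
  · rw [Finset.prod_eq_zero (Finset.mem_range.2 h) (by simp)]
    simp [h.ne]
  · subst h
    have hprod : ∏ j ∈ Finset.range k, ((k:ℝ) - j) = (k.factorial : ℝ) := by
      rw [Finset.prod_congr rfl (fun j hj =>
        (Nat.cast_sub (le_of_lt (Finset.mem_range.1 hj))).symm), ← Nat.cast_prod,
        ← Nat.descFactorial_eq_prod_range, Nat.descFactorial_self]
    rw [hprod, Nat.sub_self, pow_zero, mul_one, if_pos rfl,
      div_mul_cancel₀ _ (Nat.cast_ne_zero.2 k.factorial_ne_zero)]
  · rw [zero_pow (Nat.sub_ne_zero_of_lt h)]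
    simp [h.ne']

lemma lint_rpow_head {x : ℝ} (hx : 0 < x) {p : ℝ} (hp : -1 < p) :
    ∫⁻ t in Ioo (0:ℝ) x, ENNReal.ofReal (t ^ p) = ENNReal.ofReal (x ^ (p+1) / (p+1)) := by
  have hint : IntegrableOn (fun t : ℝ => t ^ p) (Ioo 0 x) := by
    have h := intervalIntegral.intervalIntegrable_rpow' (a := 0) (b := x) hp
    rw [intervalIntegrable_iff_integrableOn_Ioo_of_le hx.le] at h
    exact h
  have hnn : 0 ≤ᵐ[volume.restrict (Ioo (0:ℝ) x)] fun t : ℝ => t ^ p :=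
    (ae_restrict_iff' measurableSet_Ioo).2
      (Filter.Eventually.of_forall fun t ht => Real.rpow_nonneg ht.1.le p)
  rw [← ofReal_integral_eq_lintegral_ofReal hint hnn]
  congr 1
  rw [← integral_Ioc_eq_integral_Ioo, ← intervalIntegral.integral_of_le hx.le,
    integral_rpow (Or.inl hp), Real.zero_rpow (by linarith : p + 1 ≠ 0), sub_zero]

lemma lint_rpow_tail {t A δ : ℝ} (ht : 0 < t) (htA : t < A) (hδ : 0 < δ) :
    ∫⁻ x in Ioo t A, ENNReal.ofReal (x ^ (-1-δ)) ≤ ENNReal.ofReal (t ^ (-δ) / δ) := by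
  have hc : ContinuousOn (fun x : ℝ => x ^ (-1-δ)) (Icc t A) := fun y hy =>
    (Real.continuousAt_rpow_const y _ (Or.inl (ne_of_gt (lt_of_lt_of_le ht hy.1)))).continuousWithinAt
  have hint : IntegrableOn (fun x : ℝ => x ^ (-1-δ)) (Ioo t A) :=
    (hc.integrableOn_Icc).mono_set Ioo_subset_Icc_self
  have hnn : 0 ≤ᵐ[volume.restrict (Ioo t A)] fun x : ℝ => x ^ (-1-δ) :=
    (ae_restrict_iff' measurableSet_Ioo).2
      (Filter.Eventually.of_forall fun y hy => Real.rpow_nonneg (ht.trans hy.1).le _)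
  rw [← ofReal_integral_eq_lintegral_ofReal hint hnn]
  apply ENNReal.ofReal_le_ofReal
  rw [← integral_Ioc_eq_integral_Ioo, ← intervalIntegral.integral_of_le htA.le,
    integral_rpow (Or.inr ⟨by linarith, notMem_uIcc_of_lt ht (ht.trans htA)⟩)]
  have he : -1 - δ + 1 = -δ := by ring
  rw [he]
  have h1 : (A ^ (-δ) - t ^ (-δ)) / (-δ) = (t ^ (-δ) - A ^ (-δ)) / δ := by
    rw [div_neg, neg_div', neg_sub]
  rw [h1]
  have h2 : t ^ (-δ) - A ^ (-δ) ≤ t ^ (-δ) := by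
    have := Real.rpow_nonneg (by linarith : (0:ℝ) ≤ A) (-δ)
    linarith
  exact div_le_div_of_nonneg_right h2 hδ.le

lemma hardy_L2 {A : ℝ} (hA : 0 < A) {G H : ℝ → ℝ} (hGcont : ContinuousOn G (Icc 0 A))
    (hHcont : ContinuousOn H (Icc 0 A))
    (hderiv : ∀ y ∈ Ioo 0 A, HasDerivAt G (H y) y) (hG0 : G 0 = 0)
    {β : ℝ} (hβ : 1 < β) :
    ∫⁻ x in Ioo (0:ℝ) A, ENNReal.ofReal ((G x) ^ 2 / x ^ β)
      ≤ ENNReal.ofReal (2 / (β - 1) * (2 / (β - 1))) *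
        ∫⁻ x in Ioo (0:ℝ) A, ENNReal.ofReal ((H x) ^ 2 / x ^ (β - 2)) := by
  set δ : ℝ := (β - 1) / 2 with hδdef
  have hδ : 0 < δ := by simp only [hδdef]; linarith
  have hδinv : 2 / (β - 1) = 1 / δ := by rw [hδdef]; field_simp
  set w : ℝ := 2 - β + δ with hwdef
  set Φ : ℝ → ℝ≥0∞ := fun t => (‖H t‖₊ : ℝ≥0∞) ^ 2 * ENNReal.ofReal (t ^ w) with hΦdef
  have hΦ_ne_top : ∀ t, Φ t ≠ ⊤ :=
    fun t => ENNReal.mul_ne_top (by simp [ENNReal.pow_ne_top]) ENNReal.ofReal_ne_top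
  -- FTC: G x = ∫ t in Ioo 0 x, H t
  have hGft : ∀ x ∈ Ioo (0:ℝ) A, G x = ∫ t in Ioo (0:ℝ) x, H t := by
    intro x hx
    have hI : ∫ t in (0:ℝ)..x, H t = G x - G 0 :=
      intervalIntegral.integral_eq_sub_of_hasDeriv_right_of_le hx.1.le
        (hGcont.mono (Icc_subset_Icc_right hx.2.le))
        (fun y hy =>
          ((hderiv y ⟨hy.1, hy.2.trans hx.2⟩).hasDerivWithinAt))
        ((hHcont.mono (Icc_subset_Icc_right hx.2.le)).intervalIntegrable_of_Icc hx.1.le)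
    rw [hG0, sub_zero] at hI
    rw [← hI, intervalIntegral.integral_of_le hx.1.le, integral_Ioc_eq_integral_Ioo]
  -- measurability
  have hHmeas : AEMeasurable H (volume.restrict (Ioo (0:ℝ) A)) :=
    (hHcont.aemeasurable measurableSet_Icc).mono_measure
      (Measure.restrict_mono Ioo_subset_Icc_self le_rfl)
  have hrpow_meas : ∀ (e : ℝ) {a b : ℝ}, 0 ≤ a →
      AEMeasurable (fun t : ℝ => ENNReal.ofReal (t ^ e)) (volume.restrict (Ioo a b)) := by
    intro e a b ha
    have hc : ContinuousOn (fun t : ℝ => t ^ e) (Ioo a b) := fun y hy =>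
      (Real.continuousAt_rpow_const y _ (Or.inl (ne_of_gt (lt_of_le_of_lt ha hy.1)))).continuousWithinAt
    exact (hc.aemeasurable measurableSet_Ioo).ennreal_ofReal
  have hΦmeas : AEMeasurable Φ (volume.restrict (Ioo (0:ℝ) A)) :=
    (hHmeas.enorm.pow_const 2).mul (hrpow_meas w le_rfl)
  -- pointwise key bound
  have key : ∀ x ∈ Ioo (0:ℝ) A, ENNReal.ofReal ((G x) ^ 2 / x ^ β)
      ≤ ENNReal.ofReal (1 / δ) *
        (ENNReal.ofReal (x ^ (-1 - δ)) * ∫⁻ t in Ioo (0:ℝ) x, Φ t) := by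
    intro x hx
    have hx0 : 0 < x := hx.1
    have hb : ENNReal.ofReal ((G x) ^ 2 / x ^ β)
        = (‖G x‖₊ : ℝ≥0∞) ^ 2 * ENNReal.ofReal (x ^ (-β)) := by
      rw [div_eq_mul_inv, ← Real.rpow_neg hx0.le, ENNReal.ofReal_mul (sq_nonneg _)]
      congr 1
      rw [← enorm_eq_nnnorm, Real.enorm_eq_ofReal_abs, ← ENNReal.ofReal_pow (abs_nonneg _), sq_abs]
    set μx := volume.restrict (Ioo (0:ℝ) x) with hμx
    have hHx : AEMeasurable H μx :=
      hHmeas.mono_measure (Measure.restrict_mono (Ioo_subset_Ioo le_rfl hx.2.le) le_rfl)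
    set u : ℝ → ℝ≥0∞ := fun t => (‖H t‖₊ : ℝ≥0∞) * ENNReal.ofReal (t ^ (w / 2)) with hu
    set v : ℝ → ℝ≥0∞ := fun t => ENNReal.ofReal (t ^ (-(w / 2))) with hv
    have hum : AEMeasurable u μx := hHx.enorm.mul (hrpow_meas (w/2) le_rfl)
    have hvm : AEMeasurable v μx := hrpow_meas (-(w/2)) le_rfl
    have hconj : Real.HolderConjugate 2 2 := Real.HolderConjugate.two_two
    have hold := ENNReal.lintegral_mul_le_Lp_mul_Lq μx hconj hum hvm
    have hGle : (‖G x‖₊ : ℝ≥0∞) ≤ ∫⁻ t in Ioo (0:ℝ) x, (u * v) t := by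
      rw [hGft x hx]
      refine (enorm_integral_le_lintegral_enorm _).trans (le_of_eq ?_)
      refine setLIntegral_congr_fun measurableSet_Ioo ?_
      intro t ht
      simp only [Pi.mul_apply, hu, hv, mul_assoc, enorm_eq_nnnorm]
      rw [← ENNReal.ofReal_mul (Real.rpow_nonneg ht.1.le _),
        ← Real.rpow_add ht.1, add_neg_cancel, Real.rpow_zero, ENNReal.ofReal_one, mul_one]
    -- compute ∫⁻ v^2
    have hv2 : ∫⁻ t in Ioo (0:ℝ) x, v t ^ (2:ℝ) = ENNReal.ofReal (x ^ δ / δ) := by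
      have hpt : ∀ t ∈ Ioo (0:ℝ) x, v t ^ (2:ℝ) = ENNReal.ofReal (t ^ (δ - 1)) := by
        intro t ht
        show ENNReal.ofReal (t ^ (-(w / 2))) ^ (2:ℝ) = ENNReal.ofReal (t ^ (δ - 1))
        rw [ENNReal.ofReal_rpow_of_nonneg (Real.rpow_nonneg ht.1.le _)
            (by norm_num : (0:ℝ) ≤ 2), ← Real.rpow_mul ht.1.le]
        congr 1
        rw [hwdef, hδdef]; ring
      rw [setLIntegral_congr_fun measurableSet_Ioo hpt,
        lint_rpow_head hx0 (by linarith : (-1:ℝ) < δ - 1),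
        show δ - 1 + 1 = δ from by ring]
    have hu2 : ∫⁻ t in Ioo (0:ℝ) x, u t ^ (2:ℝ) = ∫⁻ t in Ioo (0:ℝ) x, Φ t := by
      refine setLIntegral_congr_fun measurableSet_Ioo ?_
      intro t ht
      show ((‖H t‖₊ : ℝ≥0∞) * ENNReal.ofReal (t ^ (w / 2))) ^ (2:ℝ)
          = (‖H t‖₊ : ℝ≥0∞) ^ 2 * ENNReal.ofReal (t ^ w)
      rw [ENNReal.mul_rpow_of_nonneg _ _ (by norm_num : (0:ℝ) ≤ 2),
        ENNReal.ofReal_rpow_of_nonneg (Real.rpow_nonneg ht.1.le _)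
          (by norm_num : (0:ℝ) ≤ 2),
        ← Real.rpow_mul ht.1.le, div_mul_cancel₀ _ (two_ne_zero)]
      congr 1
      rw [← ENNReal.rpow_natCast (‖H t‖₊ : ℝ≥0∞) 2]
      norm_num
    calc ENNReal.ofReal ((G x) ^ 2 / x ^ β)
        = (‖G x‖₊ : ℝ≥0∞) ^ 2 * ENNReal.ofReal (x ^ (-β)) := hb
      _ ≤ (∫⁻ t in Ioo (0:ℝ) x, (u * v) t) ^ 2 * ENNReal.ofReal (x ^ (-β)) := by
          exact mul_le_mul_left (pow_le_pow_left' hGle 2) _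
      _ ≤ ((∫⁻ t in Ioo (0:ℝ) x, u t ^ (2:ℝ)) ^ (1/(2:ℝ)) *
            (∫⁻ t in Ioo (0:ℝ) x, v t ^ (2:ℝ)) ^ (1/(2:ℝ))) ^ 2 *
            ENNReal.ofReal (x ^ (-β)) := by
          exact mul_le_mul_left (pow_le_pow_left' hold 2) _
      _ = (∫⁻ t in Ioo (0:ℝ) x, u t ^ (2:ℝ)) * (∫⁻ t in Ioo (0:ℝ) x, v t ^ (2:ℝ)) *
            ENNReal.ofReal (x ^ (-β)) := by
          rw [mul_pow,
            ← ENNReal.rpow_natCast ((∫⁻ t in Ioo (0:ℝ) x, u t ^ (2:ℝ)) ^ (1/(2:ℝ))) 2,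
            ← ENNReal.rpow_natCast ((∫⁻ t in Ioo (0:ℝ) x, v t ^ (2:ℝ)) ^ (1/(2:ℝ))) 2,
            ← ENNReal.rpow_mul, ← ENNReal.rpow_mul]
          norm_num
      _ = (∫⁻ t in Ioo (0:ℝ) x, Φ t) * ENNReal.ofReal (x ^ δ / δ) *
            ENNReal.ofReal (x ^ (-β)) := by rw [hu2, hv2]
      _ = ENNReal.ofReal (1 / δ) *
            (ENNReal.ofReal (x ^ (-1 - δ)) * ∫⁻ t in Ioo (0:ℝ) x, Φ t) := by
          have h1 : x ^ δ / δ = x ^ δ * (1/δ) := by ring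
          have h2 : ENNReal.ofReal (x ^ δ * (1/δ))
              = ENNReal.ofReal (x ^ δ) * ENNReal.ofReal (1/δ) :=
            ENNReal.ofReal_mul (Real.rpow_nonneg hx0.le _)
          have h3 : ENNReal.ofReal (x ^ δ) * ENNReal.ofReal (x ^ (-β))
              = ENNReal.ofReal (x ^ (-1-δ)) := by
            rw [← ENNReal.ofReal_mul (Real.rpow_nonneg hx0.le _), ← Real.rpow_add hx0,
              show δ + -β = -1-δ from by rw [hδdef]; ring]
          rw [h1, h2]
          have h4 : (∫⁻ t in Ioo (0:ℝ) x, Φ t) *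
                (ENNReal.ofReal (x ^ δ) * ENNReal.ofReal (1/δ)) * ENNReal.ofReal (x ^ (-β))
              = ENNReal.ofReal (1/δ) * ((ENNReal.ofReal (x ^ δ) * ENNReal.ofReal (x ^ (-β))) *
                ∫⁻ t in Ioo (0:ℝ) x, Φ t) := by ring
          rw [h4, h3]
  -- Tonelli / swap part
  set W : ℝ → ℝ≥0∞ := fun x => ENNReal.ofReal (x ^ (-1 - δ)) with hWdef
  have hWne : ∀ x, W x ≠ ⊤ := fun x => ENNReal.ofReal_ne_top
  have hWmeas : AEMeasurable W (volume.restrict (Ioo (0:ℝ) A)) := hrpow_meas _ le_rfl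
  set E : Set (ℝ × ℝ) := {p | 0 < p.2 ∧ p.2 < p.1} with hEdef
  have hE : MeasurableSet E :=
    (measurableSet_lt measurable_const measurable_snd).inter
      (measurableSet_lt measurable_snd measurable_fst)
  set F : ℝ → ℝ → ℝ≥0∞ := fun x t => W x * Φ t * E.indicator 1 (x, t) with hFdef
  have hstep1 : ∫⁻ x in Ioo (0:ℝ) A, ENNReal.ofReal ((G x) ^ 2 / x ^ β)
      ≤ ENNReal.ofReal (1/δ) * ∫⁻ x in Ioo (0:ℝ) A, W x * ∫⁻ t in Ioo (0:ℝ) x, Φ t := by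
    rw [← lintegral_const_mul' _ _ ENNReal.ofReal_ne_top]
    refine lintegral_mono_ae ((ae_restrict_iff' measurableSet_Ioo).2
      (Filter.Eventually.of_forall ?_))
    intro x hx
    exact key x hx
  have hinner : ∀ x ∈ Ioo (0:ℝ) A,
      ∫⁻ t in Ioo (0:ℝ) A, F x t = W x * ∫⁻ t in Ioo (0:ℝ) x, Φ t := by
    intro x hx
    have hfun : (fun t => F x t) = fun t => W x * (Ioo (0:ℝ) x).indicator Φ t := by
      funext t
      by_cases h : t ∈ Ioo (0:ℝ) x
      · have hmem : (x, t) ∈ E := ⟨h.1, h.2⟩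
        simp only [hFdef]
        rw [Set.indicator_of_mem hmem, Set.indicator_of_mem h, Pi.one_apply, mul_one]
      · have hnmem : (x, t) ∉ E := fun hc => h ⟨hc.1, hc.2⟩
        simp only [hFdef]
        rw [Set.indicator_of_notMem hnmem, Set.indicator_of_notMem h, mul_zero, mul_zero]
    rw [hfun, lintegral_const_mul' _ _ (hWne x)]
    congr 1
    rw [lintegral_indicator measurableSet_Ioo, Measure.restrict_restrict measurableSet_Ioo,
      inter_eq_left.2 (Ioo_subset_Ioo le_rfl hx.2.le)]
  have hswap : ∫⁻ x in Ioo (0:ℝ) A, ∫⁻ t in Ioo (0:ℝ) A, F x t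
      = ∫⁻ t in Ioo (0:ℝ) A, ∫⁻ x in Ioo (0:ℝ) A, F x t :=
    lintegral_lintegral_swap
      (((hWmeas.comp_fst).mul (hΦmeas.comp_snd)).mul ((measurable_one.indicator hE).aemeasurable))
  have houter : ∀ t ∈ Ioo (0:ℝ) A, (∫⁻ x in Ioo (0:ℝ) A, F x t)
      ≤ ENNReal.ofReal (1/δ) * ENNReal.ofReal (t ^ (-δ)) * Φ t := by
    intro t ht
    have hfun : (fun x => F x t) = fun x => (Ioi t).indicator W x * Φ t := by
      funext x
      by_cases h : t < x
      · have hmem : (x, t) ∈ E := ⟨ht.1, h⟩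
        simp only [hFdef]
        rw [Set.indicator_of_mem hmem, Set.indicator_of_mem (mem_Ioi.2 h), Pi.one_apply, mul_one]
      · have hnmem : (x, t) ∉ E := fun hc => h hc.2
        simp only [hFdef]
        rw [Set.indicator_of_notMem hnmem, Set.indicator_of_notMem (by simpa using h),
          mul_zero, zero_mul]
    rw [hfun, lintegral_mul_const' _ _ (hΦ_ne_top t), lintegral_indicator measurableSet_Ioi,
      Measure.restrict_restrict measurableSet_Ioi]
    have hseteq : Ioi t ∩ Ioo 0 A = Ioo t A := by
      ext y
      simp only [mem_inter_iff, mem_Ioi, mem_Ioo]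
      exact ⟨fun ⟨h1, _, h3⟩ => ⟨h1, h3⟩, fun ⟨h1, h2⟩ => ⟨h1, ht.1.trans h1, h2⟩⟩
    rw [hseteq]
    calc (∫⁻ x in Ioo t A, W x) * Φ t ≤ ENNReal.ofReal (t ^ (-δ) / δ) * Φ t :=
          mul_le_mul_left (lint_rpow_tail ht.1 ht.2 hδ) _
      _ = ENNReal.ofReal (1/δ) * ENNReal.ofReal (t ^ (-δ)) * Φ t := by
          rw [show t ^ (-δ) / δ = 1/δ * t ^ (-δ) from by ring,
            ENNReal.ofReal_mul (div_nonneg zero_le_one hδ.le)]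
  have hRHS : ∀ t ∈ Ioo (0:ℝ) A, ENNReal.ofReal (t ^ (-δ)) * Φ t
      = ENNReal.ofReal ((H t) ^ 2 / t ^ (β - 2)) := by
    intro t ht
    have e1 : ENNReal.ofReal ((H t) ^ 2 / t ^ (β - 2))
        = (‖H t‖₊ : ℝ≥0∞) ^ 2 * ENNReal.ofReal (t ^ (-(β - 2))) := by
      rw [div_eq_mul_inv, ← Real.rpow_neg ht.1.le, ENNReal.ofReal_mul (sq_nonneg _)]
      congr 1
      rw [← enorm_eq_nnnorm, Real.enorm_eq_ofReal_abs, ← ENNReal.ofReal_pow (abs_nonneg _), sq_abs]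
    have e2 : ENNReal.ofReal (t ^ (-δ)) * ENNReal.ofReal (t ^ w)
        = ENNReal.ofReal (t ^ (-(β - 2))) := by
      rw [← ENNReal.ofReal_mul (Real.rpow_nonneg ht.1.le _), ← Real.rpow_add ht.1]
      congr 1
      rw [hwdef, hδdef]; ring
    rw [e1, hΦdef]
    calc ENNReal.ofReal (t ^ (-δ)) * ((‖H t‖₊ : ℝ≥0∞) ^ 2 * ENNReal.ofReal (t ^ w))
        = (‖H t‖₊ : ℝ≥0∞) ^ 2 * (ENNReal.ofReal (t ^ (-δ)) * ENNReal.ofReal (t ^ w)) := by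
          ring
      _ = (‖H t‖₊ : ℝ≥0∞) ^ 2 * ENNReal.ofReal (t ^ (-(β - 2))) := by rw [e2]
  calc ∫⁻ x in Ioo (0:ℝ) A, ENNReal.ofReal ((G x) ^ 2 / x ^ β)
      ≤ ENNReal.ofReal (1/δ) * ∫⁻ x in Ioo (0:ℝ) A, W x * ∫⁻ t in Ioo (0:ℝ) x, Φ t := hstep1
    _ = ENNReal.ofReal (1/δ) * ∫⁻ x in Ioo (0:ℝ) A, ∫⁻ t in Ioo (0:ℝ) A, F x t := by
        rw [setLIntegral_congr_fun measurableSet_Ioo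
          (fun x hx => (hinner x hx).symm)]
    _ = ENNReal.ofReal (1/δ) * ∫⁻ t in Ioo (0:ℝ) A, ∫⁻ x in Ioo (0:ℝ) A, F x t := by
        rw [hswap]
    _ ≤ ENNReal.ofReal (1/δ) * ∫⁻ t in Ioo (0:ℝ) A,
          ENNReal.ofReal (1/δ) * ENNReal.ofReal (t ^ (-δ)) * Φ t :=
        mul_le_mul_right (lintegral_mono_ae ((ae_restrict_iff' measurableSet_Ioo).2
          (Filter.Eventually.of_forall houter))) _
    _ = ENNReal.ofReal (1/δ) * (ENNReal.ofReal (1/δ) *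
          ∫⁻ t in Ioo (0:ℝ) A, ENNReal.ofReal (t ^ (-δ)) * Φ t) := by
        simp only [mul_assoc]
        rw [lintegral_const_mul' _ _ ENNReal.ofReal_ne_top]
    _ = ENNReal.ofReal (2 / (β - 1) * (2 / (β - 1))) *
          ∫⁻ x in Ioo (0:ℝ) A, ENNReal.ofReal ((H x) ^ 2 / x ^ (β - 2)) := by
        rw [setLIntegral_congr_fun measurableSet_Ioo hRHS,
          ← mul_assoc, ← ENNReal.ofReal_mul (div_nonneg zero_le_one hδ.le), hδinv]

/-- Key inductive step in the `L²` Taylor remainder estimate: weighted `L²` bound on the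
`i`-th derivative of the Taylor remainder by its `(i+1)`-st derivative. -/
theorem taylor_L2_inductive_step (n i : ℕ) (hin : i ≤ n) (α : ℝ)
    (hα : α ∈ Set.Ioo (-1 : ℝ) 1) :
    ∃ C > 0, ∀ (A : ℝ), 0 < A → ∀ f : ℝ → ℝ,
      ContDiffOn ℝ (n + 1) f (Set.Icc 0 A) →
      ∫⁻ x in Set.Ioo (0 : ℝ) A,
          ENNReal.ofReal ((iteratedDerivWithin i
              (fun y => f y - ∑ k ∈ Finset.range (n + 1),
                y ^ k / (k.factorial : ℝ) * iteratedDerivWithin k f (Set.Icc 0 A) 0)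
              (Set.Icc 0 A) x) ^ 2 / x ^ (2 * (n : ℝ) - 2 * (i : ℝ) + 2 + α))
        ≤ ENNReal.ofReal C *
          ∫⁻ x in Set.Ioo (0 : ℝ) A,
            ENNReal.ofReal ((iteratedDerivWithin (i + 1)
              (fun y => f y - ∑ k ∈ Finset.range (n + 1),
                y ^ k / (k.factorial : ℝ) * iteratedDerivWithin k f (Set.Icc 0 A) 0)
              (Set.Icc 0 A) x) ^ 2 / x ^ (2 * (n : ℝ) - 2 * (i : ℝ) + α)) := by
  obtain ⟨hα1, hα2⟩ := hα
  have hin' : (i : ℝ) ≤ (n : ℝ) := Nat.cast_le.2 hin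
  set β : ℝ := 2 * (n : ℝ) - 2 * (i : ℝ) + 2 + α with hβdef
  have hβ : 1 < β := by rw [hβdef]; linarith
  refine ⟨2 / (β - 1) * (2 / (β - 1)),
    mul_pos (div_pos two_pos (by linarith)) (div_pos two_pos (by linarith)), ?_⟩
  intro A hA f hf
  have hs : UniqueDiffOn ℝ (Set.Icc (0:ℝ) A) := uniqueDiffOn_Icc hA
  have h0s : (0:ℝ) ∈ Set.Icc (0:ℝ) A := Set.left_mem_Icc.2 hA.le
  set g : ℝ → ℝ := fun y => f y - ∑ k ∈ Finset.range (n + 1),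
      y ^ k / (k.factorial : ℝ) * iteratedDerivWithin k f (Set.Icc 0 A) 0 with hgdef
  set P : ℝ → ℝ := fun y => ∑ k ∈ Finset.range (n + 1),
      y ^ k / (k.factorial : ℝ) * iteratedDerivWithin k f (Set.Icc 0 A) 0 with hPdef
  have hPc : ContDiff ℝ ⊤ P := by
    rw [hPdef]
    exact ContDiff.sum fun k _ => ((contDiff_id.pow k).div_const _).mul contDiff_const
  have hgc : ContDiffOn ℝ (n + 1) g (Set.Icc (0:ℝ) A) :=
    hf.sub ((hPc.of_le le_top).contDiffOn)
  set G : ℝ → ℝ := iteratedDerivWithin i g (Set.Icc (0:ℝ) A) with hGdef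
  set H : ℝ → ℝ := iteratedDerivWithin (i + 1) g (Set.Icc (0:ℝ) A) with hHdef
  have hile : ((i : ℕ∞) : WithTop ℕ∞) ≤ ((n:ℕ∞) : WithTop ℕ∞) + 1 := by
    exact_mod_cast Nat.le_succ_of_le hin
  have hilt : ((i : ℕ∞) : WithTop ℕ∞) < ((n:ℕ∞) : WithTop ℕ∞) + 1 := by
    exact_mod_cast Nat.lt_succ_of_le hin
  have hi1le : (((i+1 : ℕ) : ℕ∞) : WithTop ℕ∞) ≤ ((n:ℕ∞) : WithTop ℕ∞) + 1 := by
    exact_mod_cast Nat.succ_le_succ hin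
  have hGcont : ContinuousOn G (Set.Icc (0:ℝ) A) :=
    hgc.continuousOn_iteratedDerivWithin hile hs
  have hHcont : ContinuousOn H (Set.Icc (0:ℝ) A) :=
    hgc.continuousOn_iteratedDerivWithin hi1le hs
  have hGder : ∀ y ∈ Set.Ioo (0:ℝ) A, HasDerivAt G (H y) y := by
    intro y hy
    have hys : y ∈ Set.Icc (0:ℝ) A := Set.Ioo_subset_Icc_self hy
    have hdiff : DifferentiableWithinAt ℝ G (Set.Icc (0:ℝ) A) y :=
      (hgc.differentiableOn_iteratedDerivWithin hilt hs) y hys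
    have h1 : HasDerivWithinAt G (H y) (Set.Icc (0:ℝ) A) y := by
      have h2 := hdiff.hasDerivWithinAt
      rwa [hHdef, iteratedDerivWithin_succ]
    exact h1.hasDerivAt (Icc_mem_nhds hy.1 hy.2)
  have hG0 : G 0 = 0 := by
    have h1 : iteratedDerivWithin i g (Set.Icc (0:ℝ) A) 0 =
        iteratedDerivWithin i f (Set.Icc (0:ℝ) A) 0 -
          iteratedDerivWithin i P (Set.Icc (0:ℝ) A) 0 :=
      iteratedDerivWithin_sub h0s hs ((hf.of_le hile).contDiffWithinAt h0s) ((hPc.of_le le_top).contDiffWithinAt)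
    have h2 : iteratedDerivWithin i P (Set.Icc (0:ℝ) A) 0 = iteratedDeriv i P 0 :=
      iterWithin_eq_iter hPc hs i h0s
    have h3 : iteratedDeriv i P 0 = iteratedDerivWithin i f (Set.Icc (0:ℝ) A) 0 := by
      rw [hPdef,
        iterDeriv_sum (n+1) i
          (fun k y => y ^ k / (k.factorial : ℝ) * iteratedDerivWithin k f (Set.Icc (0:ℝ) A) 0)
          (fun k => (((contDiff_id.pow k).div_const _).mul contDiff_const :
            ContDiff ℝ ⊤ (fun y : ℝ =>
              y ^ k / (k.factorial : ℝ) * iteratedDerivWithin k f (Set.Icc (0:ℝ) A) 0))) 0,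
        Finset.sum_congr rfl (fun k _ => monomial_iterDeriv k i _),
        Finset.sum_ite_eq' (Finset.range (n+1)) i
          (fun k => iteratedDerivWithin k f (Set.Icc (0:ℝ) A) 0),
        if_pos (Finset.mem_range.2 (Nat.lt_succ_of_le hin))]
    rw [hGdef, h1, h2, h3, sub_self]
  have main := hardy_L2 hA hGcont hHcont hGder hG0 hβ
  have hexp : 2 * (n : ℝ) - 2 * (i : ℝ) + α = β - 2 := by rw [hβdef]; ring
  rw [hexp]
  exact main
end

section
/- For every γ ∈ ℝ there is a constant C > 0, depending only on γ, with the following property. Let f : {(s, r) ∈ ℝ² : 1 ≤ s ≤ r} → ℂ be continuous and have a continuous partial derivative ∂_r f with respect to the second variable. Then for every t ≥ 1, ∫_t^∞ s^{γ}·|f(s, s)|² ds ≤ C·∫_t^∞ ∫_s^∞ r^{γ−1}·(|f(s, r)|² + r²·|∂_r f(s, r)|²) dr ds, where both sides are Lebesgue integrals of nonnegative functions, allowed to take the value +∞. -/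
open MeasureTheory Set

lemma tfb_key (γ : ℝ) (f fr : ℝ → ℝ → ℂ)
    (hf : ContinuousOn (fun p : ℝ × ℝ => f p.1 p.2) {p : ℝ × ℝ | 1 ≤ p.1 ∧ p.1 ≤ p.2})
    (hderiv : ∀ s r : ℝ, 1 ≤ s → s ≤ r → HasDerivWithinAt (f s) (fr s r) (Set.Ici s) r)
    (hfr : ContinuousOn (fun p : ℝ × ℝ => fr p.1 p.2) {p : ℝ × ℝ | 1 ≤ p.1 ∧ p.1 ≤ p.2})
    (s : ℝ) (hs : 1 ≤ s) :
    ENNReal.ofReal (s ^ γ * ‖f s s‖ ^ 2)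
      ≤ ENNReal.ofReal (2 * max 1 ((2:ℝ) ^ (1 - γ))) *
        ∫⁻ r in Set.Ici s, ENNReal.ofReal (r ^ (γ - 1) * (‖f s r‖ ^ 2 + r ^ 2 * ‖fr s r‖ ^ 2)) := by
  have hs0 : (0:ℝ) < s := lt_of_lt_of_le one_pos hs
  have hs2 : s ≤ 2 * s := by linarith
  set K : ℝ := max 1 ((2:ℝ) ^ (1 - γ)) with hK
  have hK1 : (1:ℝ) ≤ K := le_max_left _ _
  have hK0 : (0:ℝ) < K := lt_of_lt_of_le one_pos hK1
  -- notation
  set G : ℝ → ℝ := fun x => ‖f s x‖ ^ 2 with hGdef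
  set H : ℝ → ℝ := fun x => ‖fr s x‖ ^ 2 with hHdef
  set D : ℝ → ℝ := fun x => 2 * ((f s x).re * (fr s x).re + (f s x).im * (fr s x).im) with hDdef
  set ψ : ℝ → ℝ := fun x => G x / x + x * H x with hψdef
  set F : ℝ → ℝ := fun x => x ^ (γ - 1) * (G x + x ^ 2 * H x) with hFdef
  have hG0 : ∀ x, 0 ≤ G x := fun x => by simp only [hGdef]; positivity
  have hH0 : ∀ x, 0 ≤ H x := fun x => by simp only [hHdef]; positivity
  -- continuity
  have hfc : ContinuousOn (f s) (Ici s) := by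
    have := hf.comp (Continuous.continuousOn (continuous_const.prodMk continuous_id))
      (fun x (hx : x ∈ Ici s) => ⟨hs, hx⟩)
    exact this
  have hfrc : ContinuousOn (fr s) (Ici s) := by
    have := hfr.comp (Continuous.continuousOn (continuous_const.prodMk continuous_id))
      (fun x (hx : x ∈ Ici s) => ⟨hs, hx⟩)
    exact this
  have hGc : ContinuousOn G (Ici s) := hfc.norm.pow 2
  have hHc : ContinuousOn H (Ici s) := hfrc.norm.pow 2
  have hne : ∀ x ∈ Ici s, x ≠ 0 := fun x hx => ne_of_gt (lt_of_lt_of_le hs0 hx)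
  have hψc : ContinuousOn ψ (Ici s) :=
    (hGc.div continuousOn_id hne).add (continuousOn_id.mul hHc)
  have hDc : ContinuousOn D (Ici s) := by
    apply continuousOn_const.mul
    exact ((Complex.continuous_re.comp_continuousOn hfc).mul
      (Complex.continuous_re.comp_continuousOn hfrc)).add
      ((Complex.continuous_im.comp_continuousOn hfc).mul
      (Complex.continuous_im.comp_continuousOn hfrc))
  have hFc : ContinuousOn F (Ici s) := by
    apply ContinuousOn.mul
    · exact continuousOn_id.rpow_const (fun x hx => Or.inl (hne x hx))
    · exact hGc.add ((continuousOn_id.pow 2).mul hHc)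
  -- norm squared as re² + im²
  have hGre : ∀ x, G x = (f s x).re * (f s x).re + (f s x).im * (f s x).im := by
    intro x
    simp only [hGdef]
    rw [Complex.sq_norm, Complex.normSq_apply]
  have hHre : ∀ x, H x = (fr s x).re * (fr s x).re + (fr s x).im * (fr s x).im := by
    intro x
    simp only [hHdef]
    rw [Complex.sq_norm, Complex.normSq_apply]
  -- derivative of G
  have hGd : ∀ x ∈ Ici s, HasDerivWithinAt G (D x) (Ici s) x := by
    intro x hx
    have hd := hderiv s x hs hx
    have hre : HasDerivWithinAt (fun y => (f s y).re) ((fr s x).re) (Ici s) x := by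
      have := Complex.reCLM.hasFDerivAt.comp_hasDerivWithinAt x hd
      exact this
    have him : HasDerivWithinAt (fun y => (f s y).im) ((fr s x).im) (Ici s) x := by
      have := Complex.imCLM.hasFDerivAt.comp_hasDerivWithinAt x hd
      exact this
    have h1 := (hre.mul hre).add (him.mul him)
    have h2 : HasDerivWithinAt G
        ((fr s x).re * (f s x).re + (f s x).re * (fr s x).re +
          ((fr s x).im * (f s x).im + (f s x).im * (fr s x).im)) (Ici s) x :=
      h1.congr (fun y _ => hGre y) (hGre x)
    convert h2 using 1
    simp only [hDdef]; ring
  -- |D| ≤ ψ pointwise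
  have hDψ : ∀ x ∈ Ici s, -ψ x ≤ D x ∧ D x ≤ ψ x := by
    intro x hx
    have hx0 : (0:ℝ) < x := lt_of_lt_of_le hs0 hx
    have hnorm : G x = (f s x).re * (f s x).re + (f s x).im * (f s x).im := hGre x
    have hnorm' : H x = (fr s x).re * (fr s x).re + (fr s x).im * (fr s x).im := hHre x
    have hψx : ψ x = (G x + x ^ 2 * H x) / x := by
      simp only [hψdef]; field_simp
    have hDx : D x = 2 * ((f s x).re * (fr s x).re + (f s x).im * (fr s x).im) := rfl
    constructor
    · rw [hψx, neg_le, le_div_iff₀ hx0]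
      nlinarith [sq_nonneg ((f s x).re + x * (fr s x).re), sq_nonneg ((f s x).im + x * (fr s x).im)]
    · rw [hψx, le_div_iff₀ hx0]
      nlinarith [sq_nonneg ((f s x).re - x * (fr s x).re), sq_nonneg ((f s x).im - x * (fr s x).im)]
  -- integrability on [s, 2s]
  have hsub2 : Icc s (2 * s) ⊆ Ici s := Icc_subset_Ici_self
  have hGint : IntegrableOn G (Icc s (2 * s)) := (hGc.mono hsub2).integrableOn_Icc
  have hψint : IntegrableOn ψ (Icc s (2 * s)) := (hψc.mono hsub2).integrableOn_Icc
  have hFint : IntegrableOn F (Icc s (2 * s)) := (hFc.mono hsub2).integrableOn_Icc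
  have hψnn : ∀ x ∈ Icc s (2 * s), 0 ≤ ψ x := by
    intro x hx
    have hx0 : (0:ℝ) < x := lt_of_lt_of_le hs0 hx.1
    simp only [hψdef]
    exact add_nonneg (div_nonneg (hG0 x) hx0.le) (mul_nonneg hx0.le (hH0 x))
  -- FTC step
  have hstep : ∀ r0 ∈ Icc s (2 * s), G s ≤ G r0 + ∫ x in Icc s (2 * s), ψ x := by
    intro r0 hr0
    have hsr0 : s ≤ r0 := hr0.1
    have hIccsub : Icc s r0 ⊆ Ici s := Icc_subset_Ici_self
    have hDint : IntervalIntegrable D volume s r0 :=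
      (hDc.mono (by rw [uIcc_of_le hsr0]; exact hIccsub)).intervalIntegrable
    have hψint' : IntervalIntegrable ψ volume s r0 :=
      (hψc.mono (by rw [uIcc_of_le hsr0]; exact hIccsub)).intervalIntegrable
    have hftc : ∫ x in s..r0, D x = G r0 - G s :=
      intervalIntegral.integral_eq_sub_of_hasDeriv_right_of_le hsr0 (hGc.mono hIccsub)
        (fun x hx => (hGd x (le_of_lt hx.1)).mono (fun y hy => le_of_lt (lt_trans hx.1 hy))) hDint
    have hlow : -(∫ x in s..r0, ψ x) ≤ ∫ x in s..r0, D x := by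
      rw [← intervalIntegral.integral_neg]
      exact intervalIntegral.integral_mono_on hsr0 hψint'.neg hDint
        (fun x hx => (hDψ x (hIccsub hx)).1)
    have hmono : ∫ x in s..r0, ψ x ≤ ∫ x in Icc s (2 * s), ψ x := by
      rw [intervalIntegral.integral_of_le hsr0, ← integral_Icc_eq_integral_Ioc]
      exact setIntegral_mono_set hψint ((ae_restrict_iff' measurableSet_Icc).2 (ae_of_all _ hψnn))
        (HasSubset.Subset.eventuallyLE (Icc_subset_Icc_right hr0.2))
    linarith
  -- averaging
  have hvol : (volume (Icc s (2 * s))).toReal = s := by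
    rw [Real.volume_Icc, ENNReal.toReal_ofReal (by linarith)]; ring
  have hconst : IntegrableOn (fun _ : ℝ => (∫ x in Icc s (2 * s), ψ x)) (Icc s (2 * s)) :=
    integrableOn_const measure_Icc_lt_top.ne
  have havg : s * G s ≤ (∫ x in Icc s (2 * s), G x) + s * (∫ x in Icc s (2 * s), ψ x) := by
    have h1 : ∫ _ in Icc s (2 * s), G s ≤
        ∫ r0 in Icc s (2 * s), (G r0 + (∫ x in Icc s (2 * s), ψ x)) :=
      setIntegral_mono_on (integrableOn_const measure_Icc_lt_top.ne)
        (hGint.add hconst) measurableSet_Icc hstep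
    rw [setIntegral_const, measureReal_def, hvol, smul_eq_mul] at h1
    rw [integral_add hGint hconst, setIntegral_const, measureReal_def, hvol, smul_eq_mul] at h1
    exact h1
  -- pointwise comparison with F
  have hcomp : ∀ x ∈ Icc s (2 * s), s ^ (γ - 1) * G x + s ^ γ * ψ x ≤ 2 * K * F x := by
    intro x hx
    have hxs : s ≤ x := hx.1
    have hx2 : x ≤ 2 * s := hx.2
    have hx0 : (0:ℝ) < x := lt_of_lt_of_le hs0 hxs
    have hxp1 : (0:ℝ) ≤ x ^ (γ - 1) := (Real.rpow_pos_of_pos hx0 _).le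
    have h1 : s ^ (γ - 1) ≤ K * x ^ (γ - 1) := by
      rcases le_or_gt 0 (γ - 1) with h | h
      · calc s ^ (γ - 1) ≤ x ^ (γ - 1) := Real.rpow_le_rpow hs0.le hxs h
          _ ≤ K * x ^ (γ - 1) := le_mul_of_one_le_left hxp1 hK1
      · have ha : (2 * s) ^ (γ - 1) ≤ x ^ (γ - 1) :=
          Real.rpow_le_rpow_of_nonpos hx0 hx2 h.le
        have hb : (2 * s) ^ (γ - 1) = 2 ^ (γ - 1) * s ^ (γ - 1) :=
          Real.mul_rpow (by norm_num) hs0.le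
        have hc : (2:ℝ) ^ (1 - γ) * 2 ^ (γ - 1) = 1 := by
          rw [← Real.rpow_add two_pos]; norm_num
        calc s ^ (γ - 1) = 2 ^ (1 - γ) * ((2 * s) ^ (γ - 1)) := by
              rw [hb, ← mul_assoc, hc, one_mul]
          _ ≤ 2 ^ (1 - γ) * x ^ (γ - 1) :=
              mul_le_mul_of_nonneg_left ha (Real.rpow_pos_of_pos two_pos _).le
          _ ≤ K * x ^ (γ - 1) := mul_le_mul_of_nonneg_right (le_max_right _ _) hxp1
    have h2 : s ^ γ ≤ K * x ^ γ := by
      rcases le_or_gt 0 γ with h | h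
      · calc s ^ γ ≤ x ^ γ := Real.rpow_le_rpow hs0.le hxs h
          _ ≤ K * x ^ γ := le_mul_of_one_le_left (Real.rpow_pos_of_pos hx0 γ).le hK1
      · have ha : (2 * s) ^ γ ≤ x ^ γ := Real.rpow_le_rpow_of_nonpos hx0 hx2 h.le
        have hb : (2 * s) ^ γ = 2 ^ γ * s ^ γ := Real.mul_rpow (by norm_num) hs0.le
        have hc : (2:ℝ) ^ (-γ) * 2 ^ γ = 1 := by rw [← Real.rpow_add two_pos]; norm_num
        have hle : (2:ℝ) ^ (-γ) ≤ 2 ^ (1 - γ) :=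
          Real.rpow_le_rpow_of_exponent_le one_le_two (by linarith)
        calc s ^ γ = 2 ^ (-γ) * ((2 * s) ^ γ) := by rw [hb, ← mul_assoc, hc, one_mul]
          _ ≤ 2 ^ (-γ) * x ^ γ :=
              mul_le_mul_of_nonneg_left ha (Real.rpow_pos_of_pos two_pos _).le
          _ ≤ 2 ^ (1 - γ) * x ^ γ :=
              mul_le_mul_of_nonneg_right hle (Real.rpow_pos_of_pos hx0 _).le
          _ ≤ K * x ^ γ :=
              mul_le_mul_of_nonneg_right (le_max_right _ _) (Real.rpow_pos_of_pos hx0 _).le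
    have hss : s ^ (γ - 1) * s = s ^ γ := by
      rw [← Real.rpow_add_one hs0.ne' (γ - 1)]; norm_num
    have h3 : s ^ γ / x ≤ s ^ (γ - 1) := by
      rw [div_le_iff₀ hx0]
      calc s ^ γ = s ^ (γ - 1) * s := hss.symm
        _ ≤ s ^ (γ - 1) * x := mul_le_mul_of_nonneg_left hxs (Real.rpow_pos_of_pos hs0 _).le
    have h4 : x ^ (γ - 1) * x ^ 2 = x ^ γ * x := by
      rw [sq, ← mul_assoc, ← Real.rpow_add_one hx0.ne' (γ - 1)]; norm_num
    simp only [hψdef, hFdef]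
    have e1 : s ^ γ * (G x / x) ≤ s ^ (γ - 1) * G x := by
      calc s ^ γ * (G x / x) = (s ^ γ / x) * G x := by ring
        _ ≤ s ^ (γ - 1) * G x := mul_le_mul_of_nonneg_right h3 (hG0 x)
    have e2 : s ^ (γ - 1) * G x ≤ K * (x ^ (γ - 1) * G x) := by
      calc s ^ (γ - 1) * G x ≤ (K * x ^ (γ - 1)) * G x :=
            mul_le_mul_of_nonneg_right h1 (hG0 x)
        _ = K * (x ^ (γ - 1) * G x) := by ring
    have e3 : s ^ γ * (x * H x) ≤ K * (x ^ (γ - 1) * x ^ 2 * H x) := by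
      calc s ^ γ * (x * H x) = (s ^ γ * x) * H x := by ring
        _ ≤ (K * x ^ γ * x) * H x :=
            mul_le_mul_of_nonneg_right (mul_le_mul_of_nonneg_right h2 hx0.le) (hH0 x)
        _ = K * (x ^ γ * x * H x) := by ring
        _ = K * (x ^ (γ - 1) * x ^ 2 * H x) := by rw [h4]
    have e4 : (0:ℝ) ≤ K * (x ^ (γ - 1) * x ^ 2 * H x) := by positivity
    nlinarith [e1, e2, e3, e4]
  -- assemble the real inequality
  have hFnn : ∀ x ∈ Icc s (2 * s), 0 ≤ F x := by
    intro x hx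
    have hx0 : (0:ℝ) < x := lt_of_lt_of_le hs0 hx.1
    simp only [hFdef]
    positivity
  have hss : s ^ (γ - 1) * s = s ^ γ := by
    rw [← Real.rpow_add_one hs0.ne' (γ - 1)]; norm_num
  have hfinal : s ^ γ * G s ≤ 2 * K * ∫ x in Icc s (2 * s), F x := by
    have h5 : s ^ γ * G s ≤
        s ^ (γ - 1) * (∫ x in Icc s (2 * s), G x) + s ^ γ * (∫ x in Icc s (2 * s), ψ x) := by
      have hmul := mul_le_mul_of_nonneg_left havg (Real.rpow_pos_of_pos hs0 (γ - 1)).le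
      calc s ^ γ * G s = s ^ (γ - 1) * (s * G s) := by rw [← hss]; ring
        _ ≤ s ^ (γ - 1) * ((∫ x in Icc s (2 * s), G x) + s * (∫ x in Icc s (2 * s), ψ x)) := hmul
        _ = s ^ (γ - 1) * (∫ x in Icc s (2 * s), G x) + s ^ γ * (∫ x in Icc s (2 * s), ψ x) := by
            rw [← hss]; ring
    have h6 : s ^ (γ - 1) * (∫ x in Icc s (2 * s), G x) + s ^ γ * (∫ x in Icc s (2 * s), ψ x)
        = ∫ x in Icc s (2 * s), (s ^ (γ - 1) * G x + s ^ γ * ψ x) := by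
      rw [integral_add (hGint.const_mul _) (hψint.const_mul _), integral_const_mul,
        integral_const_mul]
    have h7 : ∫ x in Icc s (2 * s), (s ^ (γ - 1) * G x + s ^ γ * ψ x)
        ≤ ∫ x in Icc s (2 * s), 2 * K * F x :=
      setIntegral_mono_on ((hGint.const_mul _).add (hψint.const_mul _)) (hFint.const_mul _)
        measurableSet_Icc hcomp
    rw [integral_const_mul] at h7
    linarith
  -- pass to lintegrals
  calc ENNReal.ofReal (s ^ γ * ‖f s s‖ ^ 2)
      ≤ ENNReal.ofReal (2 * K * ∫ x in Icc s (2 * s), F x) := ENNReal.ofReal_le_ofReal hfinal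
    _ = ENNReal.ofReal (2 * K) * ENNReal.ofReal (∫ x in Icc s (2 * s), F x) :=
        ENNReal.ofReal_mul (by positivity)
    _ = ENNReal.ofReal (2 * K) * ∫⁻ x in Icc s (2 * s), ENNReal.ofReal (F x) := by
        rw [ofReal_integral_eq_lintegral_ofReal hFint
          ((ae_restrict_iff' measurableSet_Icc).2 (ae_of_all _ hFnn))]
    _ ≤ ENNReal.ofReal (2 * K) *
        ∫⁻ r in Ici s, ENNReal.ofReal (r ^ (γ - 1) * (‖f s r‖ ^ 2 + r ^ 2 * ‖fr s r‖ ^ 2)) := by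
        exact mul_le_mul_right (lintegral_mono_set hsub2) _

/-- Transition flux is controlled by bulk: radial form. -/
theorem transition_flux_controlled_by_bulk (γ : ℝ) :
    ∃ C > 0, ∀ (f fr : ℝ → ℝ → ℂ),
      ContinuousOn (fun p : ℝ × ℝ => f p.1 p.2) {p : ℝ × ℝ | 1 ≤ p.1 ∧ p.1 ≤ p.2} →
      (∀ s r : ℝ, 1 ≤ s → s ≤ r → HasDerivWithinAt (f s) (fr s r) (Set.Ici s) r) →
      ContinuousOn (fun p : ℝ × ℝ => fr p.1 p.2) {p : ℝ × ℝ | 1 ≤ p.1 ∧ p.1 ≤ p.2} →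
      ∀ t : ℝ, 1 ≤ t →
        ∫⁻ s in Set.Ici t, ENNReal.ofReal (s ^ γ * ‖f s s‖ ^ 2)
          ≤ ENNReal.ofReal C *
            ∫⁻ s in Set.Ici t, ∫⁻ r in Set.Ici s,
              ENNReal.ofReal (r ^ (γ - 1) * (‖f s r‖ ^ 2 + r ^ 2 * ‖fr s r‖ ^ 2)) := by
  refine ⟨2 * max 1 ((2:ℝ) ^ (1 - γ)), by positivity, ?_⟩
  intro f fr hf hd hfr t ht
  calc ∫⁻ s in Set.Ici t, ENNReal.ofReal (s ^ γ * ‖f s s‖ ^ 2)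
      ≤ ∫⁻ s in Set.Ici t, (ENNReal.ofReal (2 * max 1 ((2:ℝ) ^ (1 - γ))) *
          ∫⁻ r in Set.Ici s, ENNReal.ofReal (r ^ (γ - 1) * (‖f s r‖ ^ 2 + r ^ 2 * ‖fr s r‖ ^ 2))) := by
        apply lintegral_mono_ae
        rw [ae_restrict_iff' measurableSet_Ici]
        exact ae_of_all _ fun s hst => tfb_key γ f fr hf hd hfr s (le_trans ht hst)
    _ = _ := lintegral_const_mul' _ _ ENNReal.ofReal_ne_top
end

section
/- Let γ ∈ ℝ, let r1 > 0, and let g : [r1, ∞) → ℂ be continuously differentiable such that r ↦ r^{−1−γ}·|g(r)|² and r ↦ r^{1+γ}·|g′(r)|² are Lebesgue integrable on [r1, ∞). Then for every r2 ≥ r1, |g(r2)|² ≤ |g(r1)|² + 2·(∫_{r1}^∞ r^{−1−γ}·|g(r)|² dr)^{1/2}·(∫_{r1}^∞ r^{1+γ}·|g′(r)|² dr)^{1/2}. -/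
open MeasureTheory Set Filter

/-! On `[r₁, r₂]` the derivative of `‖g‖²` is `2⟪g, g'⟫ ≤ 2‖g‖‖g'‖`, so the fundamental theorem
of calculus bounds `‖g r₂‖² - ‖g r₁‖²` by `2 ∫_{r₁}^{∞} ‖g‖‖g'‖`. Splitting
`‖g‖‖g'‖ = (r^{(-1-γ)/2}‖g‖) (r^{(1+γ)/2}‖g'‖)` and applying Cauchy–Schwarz gives the claim. -/

theorem norm_sq_sub_norm_sq_le_two_mul_integral {E : Type*} [NormedAddCommGroup E]
    [InnerProductSpace ℝ E] {g g' : ℝ → E} {a b : ℝ} (hab : a ≤ b)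
    (hg : ContinuousOn g (Icc a b)) (hderiv : ∀ x ∈ Ioo a b, HasDerivAt g (g' x) x)
    (hint : IntegrableOn (fun x => ‖g x‖ * ‖g' x‖) (Icc a b)) :
    ‖g b‖ ^ 2 - ‖g a‖ ^ 2 ≤ 2 * ∫ x in a..b, ‖g x‖ * ‖g' x‖ := by
  rw [← intervalIntegral.integral_const_mul]
  refine intervalIntegral.sub_le_integral_of_hasDeriv_right_of_le hab (hg.norm.pow 2)
    (fun x hx => (hderiv x hx).norm_sq.hasDerivWithinAt) (hint.const_mul 2) fun x _ => ?_
  have := real_inner_le_norm (g x) (g' x)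
  linarith

section WeightedCauchySchwarz

variable {α E F : Type*} [MeasurableSpace α] {μ : Measure α} [NormedAddCommGroup E]
  [NormedAddCommGroup F] {f : α → E} {h : α → F} {w w₁ w₂ : α → ℝ}

theorem memLp_two_sqrt_mul_norm (hw : AEStronglyMeasurable w μ) (hw₀ : 0 ≤ᵐ[μ] w)
    (hf : AEStronglyMeasurable f μ) (hint : Integrable (fun x => w x * ‖f x‖ ^ 2) μ) :
    MemLp (fun x => √(w x) * ‖f x‖) 2 μ := by
  refine (memLp_two_iff_integrable_sq
    ((Real.continuous_sqrt.comp_aestronglyMeasurable hw).mul hf.norm)).2 (hint.congr ?_)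
  filter_upwards [hw₀] with x hx
  rw [Pi.mul_apply, mul_pow, Real.sq_sqrt hx]

theorem norm_mul_norm_eq_sqrt_mul_norm_mul_sqrt_mul_norm {a b : ℝ} (ha : 0 ≤ a) (hab : a * b = 1)
    (x : E) (y : F) : ‖x‖ * ‖y‖ = (√a * ‖x‖) * (√b * ‖y‖) := by
  calc ‖x‖ * ‖y‖ = √(a * b) * (‖x‖ * ‖y‖) := by rw [hab, Real.sqrt_one, one_mul]
    _ = (√a * ‖x‖) * (√b * ‖y‖) := by rw [Real.sqrt_mul ha]; ring

variable (hw₁ : AEStronglyMeasurable w₁ μ) (hw₂ : AEStronglyMeasurable w₂ μ)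
  (hw₁₀ : 0 ≤ᵐ[μ] w₁) (hw₂₀ : 0 ≤ᵐ[μ] w₂) (hw₁₂ : ∀ᵐ x ∂μ, w₁ x * w₂ x = 1)
  (hf : AEStronglyMeasurable f μ) (hh : AEStronglyMeasurable h μ)
  (hf2 : Integrable (fun x => w₁ x * ‖f x‖ ^ 2) μ) (hh2 : Integrable (fun x => w₂ x * ‖h x‖ ^ 2) μ)
include hw₁ hw₂ hw₁₀ hw₂₀ hw₁₂ hf hh hf2 hh2

theorem integrable_norm_mul_norm_of_weighted :
    Integrable (fun x => ‖f x‖ * ‖h x‖) μ := by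
  refine ((memLp_two_sqrt_mul_norm hw₁ hw₁₀ hf hf2).integrable_mul
    (memLp_two_sqrt_mul_norm hw₂ hw₂₀ hh hh2) (p := 2) (q := 2)).congr ?_
  filter_upwards [hw₁₀, hw₁₂] with x hx₀ hx
  exact (norm_mul_norm_eq_sqrt_mul_norm_mul_sqrt_mul_norm hx₀ hx (f x) (h x)).symm

theorem integral_norm_mul_norm_le_weighted :
    ∫ x, ‖f x‖ * ‖h x‖ ∂μ ≤
      (∫ x, w₁ x * ‖f x‖ ^ 2 ∂μ) ^ (1 / 2 : ℝ) * (∫ x, w₂ x * ‖h x‖ ^ 2 ∂μ) ^ (1 / 2 : ℝ) := by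
  have hsq {v : α → ℝ} {k : α → ℝ} (hv : 0 ≤ᵐ[μ] v) :
      ∫ x, (√(v x) * k x) ^ (2 : ℝ) ∂μ = ∫ x, v x * k x ^ 2 ∂μ := by
    refine integral_congr_ae ?_
    filter_upwards [hv] with x hx
    rw [Real.rpow_two, mul_pow, Real.sq_sqrt hx]
  have hprod : ∫ x, ‖f x‖ * ‖h x‖ ∂μ = ∫ x, (√(w₁ x) * ‖f x‖) * (√(w₂ x) * ‖h x‖) ∂μ := by
    refine integral_congr_ae ?_
    filter_upwards [hw₁₀, hw₁₂] with x hx₀ hx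
    exact norm_mul_norm_eq_sqrt_mul_norm_mul_sqrt_mul_norm hx₀ hx (f x) (h x)
  have hcs := integral_mul_le_Lp_mul_Lq_of_nonneg Real.HolderConjugate.two_two
    (Eventually.of_forall fun x => mul_nonneg (Real.sqrt_nonneg (w₁ x)) (norm_nonneg (f x)))
    (Eventually.of_forall fun x => mul_nonneg (Real.sqrt_nonneg (w₂ x)) (norm_nonneg (h x)))
    (by simpa using memLp_two_sqrt_mul_norm hw₁ hw₁₀ hf hf2)
    (by simpa using memLp_two_sqrt_mul_norm hw₂ hw₂₀ hh hh2)
  rwa [hprod, ← hsq hw₁₀, ← hsq hw₂₀]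

end WeightedCauchySchwarz
/-- Radial trace/interpolation estimate underlying the Sobolev estimate on hyperboloids. -/
theorem radial_trace_estimate (γ r1 : ℝ) (hr1 : 0 < r1) (g g' : ℝ → ℂ)
    (hderiv : ∀ r ∈ Set.Ici r1, HasDerivWithinAt g (g' r) (Set.Ici r1) r)
    (hcont : ContinuousOn g' (Set.Ici r1))
    (hint1 : IntegrableOn (fun r => r ^ (-1 - γ) * ‖g r‖ ^ 2) (Set.Ici r1))
    (hint2 : IntegrableOn (fun r => r ^ (1 + γ) * ‖g' r‖ ^ 2) (Set.Ici r1)) :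
    ∀ r2, r1 ≤ r2 →
      ‖g r2‖ ^ 2 ≤ ‖g r1‖ ^ 2 +
        2 * (∫ r in Set.Ici r1, r ^ (-1 - γ) * ‖g r‖ ^ 2) ^ (1 / 2 : ℝ) *
          (∫ r in Set.Ici r1, r ^ (1 + γ) * ‖g' r‖ ^ 2) ^ (1 / 2 : ℝ) := by
  intro r2 hr2
  have hmeas : MeasurableSet (Ici r1) := measurableSet_Ici
  have hg : ContinuousOn g (Ici r1) := fun r hr => (hderiv r hr).continuousWithinAt
  have hw (c : ℝ) : AEStronglyMeasurable (fun r : ℝ => r ^ c) (volume.restrict (Ici r1)) :=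
    (measurable_id.pow_const c).aestronglyMeasurable
  have hw₀ (c : ℝ) : 0 ≤ᵐ[volume.restrict (Ici r1)] fun r : ℝ => r ^ c :=
    ae_restrict_of_forall_mem hmeas fun r hr => Real.rpow_nonneg (hr1.le.trans hr) c
  have hw₁₂ : ∀ᵐ r ∂volume.restrict (Ici r1), r ^ (-1 - γ) * r ^ (1 + γ) = 1 :=
    ae_restrict_of_forall_mem hmeas fun r hr => by
      rw [← Real.rpow_add (hr1.trans_le hr), sub_add_add_cancel, neg_add_cancel, Real.rpow_zero]
  have hgm : AEStronglyMeasurable g (volume.restrict (Ici r1)) := hg.aestronglyMeasurable hmeas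
  have hg'm : AEStronglyMeasurable g' (volume.restrict (Ici r1)) :=
    hcont.aestronglyMeasurable hmeas
  have hprod : IntegrableOn (fun r => ‖g r‖ * ‖g' r‖) (Ici r1) :=
    integrable_norm_mul_norm_of_weighted (hw _) (hw _) (hw₀ _) (hw₀ _) hw₁₂ hgm hg'm hint1 hint2
  have hftc := norm_sq_sub_norm_sq_le_two_mul_integral hr2 (hg.mono Icc_subset_Ici_self)
    (fun r hr => (hderiv r (mem_Ici.2 hr.1.le)).hasDerivAt (Ici_mem_nhds hr.1))
    (hprod.mono_set Icc_subset_Ici_self)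
  have htail : ∫ r in r1..r2, ‖g r‖ * ‖g' r‖ ≤ ∫ r in Ici r1, ‖g r‖ * ‖g' r‖ := by
    rw [intervalIntegral.integral_of_le hr2]
    exact setIntegral_mono_set hprod (Eventually.of_forall fun r => by positivity)
      (Ioc_subset_Ioi_self.trans Ioi_subset_Ici_self).eventuallyLE
  have hcs := integral_norm_mul_norm_le_weighted (hw _) (hw _) (hw₀ _) (hw₀ _) hw₁₂ hgm hg'm
    hint1 hint2
  rw [mul_assoc]
  linarith
end

section
/- Let γ > 0, let 0 < r1 ≤ r2, let c : [r1, r2] → ℝ be continuous with c ≥ 0, and let φ : [r1, r2] → ℂ be continuously differentiable. Define ρ : [r1, r2] → ℂ by ρ(r) = −φ′(r) + c(r)·φ(r). Then (1/2)·r1^{γ}·|φ(r1)|² + (γ/4)·∫_{r1}^{r2} r^{γ−1}·|φ(r)|² dr ≤ (1/2)·r2^{γ}·|φ(r2)|² + γ^{−1}·∫_{r1}^{r2} r^{γ+1}·|ρ(r)|² dr. -/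
open MeasureTheory Set

/-!
Multiplying `ρ = -φ' + c φ` by `r ^ γ φ` shows that the energy `½ r ^ γ ‖φ‖²` has derivative
`(γ/2) r ^ (γ-1) ‖φ‖² + r ^ γ c ‖φ‖² - r ^ γ ⟪φ, ρ⟫`. Since `c ≥ 0`, Cauchy–Schwarz and AM-GM bound
this from below by `(γ/4) r ^ (γ-1) ‖φ‖² - γ⁻¹ r ^ (γ+1) ‖ρ‖²`; integrating over `[r1, r2]` gives
the estimate.
-/

theorem mul_le_div_four_mul_sq_add_inv_mul_sq {γ : ℝ} (hγ : 0 < γ) (a b : ℝ) :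
    a * b ≤ γ / 4 * a ^ 2 + γ⁻¹ * b ^ 2 := by
  have hsq : γ / 4 * a ^ 2 + γ⁻¹ * b ^ 2 - a * b = (γ * a - 2 * b) ^ 2 / (4 * γ) := by
    field_simp; ring
  nlinarith [div_nonneg (sq_nonneg (γ * a - 2 * b)) (by positivity : (0 : ℝ) ≤ 4 * γ)]

theorem rpow_mul_mul_le_rpow_sub_one_add_rpow_add_one {γ r : ℝ} (hγ : 0 < γ) (hr : 0 < r)
    (x y : ℝ) :
    r ^ γ * (x * y) ≤ γ / 4 * (r ^ (γ - 1) * x ^ 2) + γ⁻¹ * (r ^ (γ + 1) * y ^ 2) := by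
  have hpow : r ^ γ = r ^ (γ - 1) * r := by
    rw [← Real.rpow_add_one hr.ne']; ring_nf
  have hpow_add_one : r ^ (γ + 1) = r ^ (γ - 1) * r ^ 2 := by
    rw [← Real.rpow_natCast, ← Real.rpow_add hr]; norm_num; ring_nf
  -- AM-GM for `x` and `r * y`, scaled by `r ^ (γ - 1)`.
  have hamgm := mul_le_mul_of_nonneg_left (mul_le_div_four_mul_sq_add_inv_mul_sq hγ x (r * y))
    (Real.rpow_nonneg hr.le (γ - 1))
  rw [hpow, hpow_add_one]
  linarith

section InnerProductSpace

variable {E : Type*} [NormedAddCommGroup E] [InnerProductSpace ℝ E]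

open scoped InnerProductSpace

theorem neg_norm_mul_norm_neg_add_smul_le_inner {c : ℝ} (hc : 0 ≤ c) (u v : E) :
    -(‖u‖ * ‖-v + c • u‖) ≤ ⟪u, v⟫_ℝ := by
  have hv : ⟪u, v⟫_ℝ = c * ‖u‖ ^ 2 - ⟪u, -v + c • u⟫_ℝ := by
    rw [inner_add_right, inner_neg_right, real_inner_smul_right, real_inner_self_eq_norm_sq]
    ring
  rw [hv]
  nlinarith [real_inner_le_norm u (-v + c • u), mul_nonneg hc (sq_nonneg ‖u‖)]

theorem hasDerivAt_half_rpow_mul_norm_sq {γ r : ℝ} (hr : r ≠ 0) {φ : ℝ → E} {φ' : E}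
    (hφ : HasDerivAt φ φ' r) :
    HasDerivAt (fun t ↦ 1 / 2 * t ^ γ * ‖φ t‖ ^ 2)
      (γ / 2 * r ^ (γ - 1) * ‖φ r‖ ^ 2 + r ^ γ * ⟪φ r, φ'⟫_ℝ) r := by
  have h := ((Real.hasDerivAt_rpow_const (p := γ) (Or.inl hr)).const_mul (1 / 2)).mul hφ.norm_sq
  exact h.congr_deriv (by ring)

theorem morawetz_density_le_energy_deriv {γ r c : ℝ} (hγ : 0 < γ) (hr : 0 < r) (hc : 0 ≤ c)
    (u v : E) :
    γ / 4 * (r ^ (γ - 1) * ‖u‖ ^ 2) - γ⁻¹ * (r ^ (γ + 1) * ‖-v + c • u‖ ^ 2)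
      ≤ γ / 2 * r ^ (γ - 1) * ‖u‖ ^ 2 + r ^ γ * ⟪u, v⟫_ℝ := by
  have hinner := mul_le_mul_of_nonneg_left (neg_norm_mul_norm_neg_add_smul_le_inner hc u v)
    (Real.rpow_nonneg hr.le γ)
  have hamgm := rpow_mul_mul_le_rpow_sub_one_add_rpow_add_one hγ hr ‖u‖ ‖-v + c • u‖
  have hnonneg : 0 ≤ γ / 4 * (r ^ (γ - 1) * ‖u‖ ^ 2) := by positivity
  nlinarith

theorem transport_energy_estimate_of_intervalIntegrable {γ r1 r2 : ℝ} (hγ : 0 < γ)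
    (hr1 : 0 < r1) (hr12 : r1 ≤ r2) {c : ℝ → ℝ} (hc : ∀ r ∈ Ioo r1 r2, 0 ≤ c r)
    {φ φ' : ℝ → E} (hφ : ContinuousOn φ (Icc r1 r2))
    (hφ' : ∀ r ∈ Ioo r1 r2, HasDerivAt φ (φ' r) r)
    (hρ : IntervalIntegrable (fun r ↦ r ^ (γ + 1) * ‖-φ' r + c r • φ r‖ ^ 2) volume r1 r2) :
    1 / 2 * r1 ^ γ * ‖φ r1‖ ^ 2 + γ / 4 * ∫ r in r1..r2, r ^ (γ - 1) * ‖φ r‖ ^ 2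
      ≤ 1 / 2 * r2 ^ γ * ‖φ r2‖ ^ 2 +
        γ⁻¹ * ∫ r in r1..r2, r ^ (γ + 1) * ‖-φ' r + c r • φ r‖ ^ 2 := by
  have hpos : ∀ r ∈ Icc r1 r2, 0 < r := fun r hr ↦ hr1.trans_le hr.1
  have hrpow (β : ℝ) : ContinuousOn (fun r : ℝ ↦ r ^ β) (Icc r1 r2) :=
    continuousOn_id.rpow_const fun r hr ↦ Or.inl (hpos r hr).ne'
  have hφint : IntervalIntegrable (fun r ↦ r ^ (γ - 1) * ‖φ r‖ ^ 2) volume r1 r2 :=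
    ((hrpow _).mul (hφ.norm.pow 2)).intervalIntegrable_of_Icc hr12
  have hintegral := intervalIntegral.integral_le_sub_of_hasDeriv_right_of_le
    (g := fun r ↦ 1 / 2 * r ^ γ * ‖φ r‖ ^ 2)
    (φ := fun r ↦
      γ / 4 * (r ^ (γ - 1) * ‖φ r‖ ^ 2) - γ⁻¹ * (r ^ (γ + 1) * ‖-φ' r + c r • φ r‖ ^ 2))
    hr12 ((continuousOn_const.mul (hrpow γ)).mul (hφ.norm.pow 2))
    (fun r hr ↦ (hasDerivAt_half_rpow_mul_norm_sq (hpos r (Ioo_subset_Icc_self hr)).ne'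
      (hφ' r hr)).hasDerivWithinAt)
    ((intervalIntegrable_iff_integrableOn_Icc_of_le hr12).1
      ((hφint.const_mul (γ / 4)).sub (hρ.const_mul γ⁻¹)))
    (fun r hr ↦ morawetz_density_le_energy_deriv hγ (hpos r (Ioo_subset_Icc_self hr))
      (hc r hr) _ _)
  rw [intervalIntegral.integral_sub, intervalIntegral.integral_const_mul,
    intervalIntegral.integral_const_mul] at hintegral
  exacts [by linarith, hφint.const_mul _, hρ.const_mul _]

end InnerProductSpace

/-- Radial core of the weighted energy estimate for the ingoing transport equation
`Y φ + b₀ φ = ρ` with `Y = -∂_r` and `b₀ = c ≥ 0`. -/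
theorem transport_energy_estimate (γ r1 r2 : ℝ) (hγ : 0 < γ) (hr1 : 0 < r1) (hr12 : r1 ≤ r2)
    (c : ℝ → ℝ) (hccont : ContinuousOn c (Set.Icc r1 r2))
    (hcpos : ∀ r ∈ Set.Icc r1 r2, 0 ≤ c r)
    (φ φ' : ℝ → ℂ)
    (hderiv : ∀ r ∈ Set.Icc r1 r2, HasDerivWithinAt φ (φ' r) (Set.Icc r1 r2) r)
    (hφ'cont : ContinuousOn φ' (Set.Icc r1 r2)) :
    1 / 2 * r1 ^ γ * ‖φ r1‖ ^ 2 + γ / 4 * ∫ r in r1..r2, r ^ (γ - 1) * ‖φ r‖ ^ 2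
      ≤ 1 / 2 * r2 ^ γ * ‖φ r2‖ ^ 2 +
        γ⁻¹ * ∫ r in r1..r2, r ^ (γ + 1) * ‖-φ' r + (c r : ℂ) * φ r‖ ^ 2 := by
  have hφ : ContinuousOn φ (Icc r1 r2) := fun r hr ↦ (hderiv r hr).continuousWithinAt
  have hρ : ContinuousOn (fun r ↦ -φ' r + c r • φ r) (Icc r1 r2) :=
    hφ'cont.neg.add (hccont.smul hφ)
  have hρint : IntervalIntegrable (fun r ↦ r ^ (γ + 1) * ‖-φ' r + c r • φ r‖ ^ 2) volume r1 r2 :=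
    ((continuousOn_id.rpow_const fun r hr ↦ Or.inl (hr1.trans_le hr.1).ne').mul
      (hρ.norm.pow 2)).intervalIntegrable_of_Icc hr12
  simp_rw [← Complex.real_smul]
  exact transport_energy_estimate_of_intervalIntegrable hγ hr1 hr12
    (fun r hr ↦ hcpos r (Ioo_subset_Icc_self hr)) hφ
    (fun r hr ↦ (hderiv r (Ioo_subset_Icc_self hr)).hasDerivAt (Icc_mem_nhds hr.1 hr.2)) hρint
end

section
/- The height function satisfies: h(r₊) = 0; h is monotone nondecreasing on [r₊, ∞) (in particular h(r) ≥ 0 for all r ≥ r₊); and h(r)/r → 2 as r → ∞. -/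
open Real Filter


/-- The radius `r₊ = M + √(M² − a²)` of the Kerr event horizon. -/
noncomputable def rplus (M a : ℝ) : ℝ := M + Real.sqrt (M ^ 2 - a ^ 2)

/-- The height function `h` defining the hyperboloidal time function `τ = v − h(r)`. -/
noncomputable def hKerr (M a Cc : ℝ) (r : ℝ) : ℝ :=
  2 * (r - rplus M a) + 4 * M * Real.log (r / rplus M a)
    + 3 * M ^ 2 * (rplus M a - r) ^ 2 / (rplus M a * r ^ 2)
    + 2 * M * Real.arctan ((Cc - 1) * M / r)
    - 2 * M * Real.arctan ((Cc - 1) * M / rplus M a)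

lemma rplus_pos {M a : ℝ} (hM : 0 < M) : 0 < rplus M a := by
  have := Real.sqrt_nonneg (M ^ 2 - a ^ 2)
  unfold rplus; linarith

lemma hKerr_hasDerivAt (M a Cc : ℝ) (hM : 0 < M) {r : ℝ} (hr : 0 < r) :
    HasDerivAt (hKerr M a Cc)
      (2 + 4 * M / r + 6 * M ^ 2 * (r - rplus M a) / r ^ 3
        - 2 * M * ((Cc - 1) * M) / (r ^ 2 + ((Cc - 1) * M) ^ 2)) r := by
  have hp : 0 < rplus M a := rplus_pos hM
  set p := rplus M a with hpdef
  set c := (Cc - 1) * M with hcdef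
  have h1 : HasDerivAt (fun r : ℝ => 2 * (r - p)) 2 r := by
    simpa using ((hasDerivAt_id r).sub_const p).const_mul 2
  have h2 : HasDerivAt (fun r : ℝ => 4 * M * Real.log (r / p)) (4 * M / r) r := by
    have hin : HasDerivAt (fun r : ℝ => r / p) (1 / p) r := by
      simpa [one_div] using (hasDerivAt_id r).div_const p
    have h' := ((Real.hasDerivAt_log (div_ne_zero hr.ne' hp.ne')).comp r hin).const_mul (4 * M)
    refine h'.congr_deriv ?_
    field_simp
  have h3 : HasDerivAt (fun r : ℝ => 3 * M ^ 2 * (p - r) ^ 2 / (p * r ^ 2))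
      (6 * M ^ 2 * (r - p) / r ^ 3) r := by
    have hu : HasDerivAt (fun r : ℝ => 3 * M ^ 2 * (p - r) ^ 2)
        (3 * M ^ 2 * (2 * (p - r) * (-1))) r := by
      have hb : HasDerivAt (fun r : ℝ => (p - r) ^ 2) (2 * (p - r) * (-1)) r := by
        have := ((hasDerivAt_id r).const_sub p).pow 2
        exact this.congr_deriv (by simp)
      exact hb.const_mul (3 * M ^ 2)
    have hv : HasDerivAt (fun r : ℝ => p * r ^ 2) (p * (2 * r)) r := by
      have := (hasDerivAt_pow 2 r).const_mul p
      simpa [mul_comm, mul_assoc] using this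
    have hvne : p * r ^ 2 ≠ 0 := by positivity
    have := hu.div hv hvne
    refine this.congr_deriv ?_
    field_simp
    ring
  have h4 : HasDerivAt (fun r : ℝ => 2 * M * Real.arctan (c / r))
      (-(2 * M * c / (r ^ 2 + c ^ 2))) r := by
    have hin : HasDerivAt (fun r : ℝ => c / r) (-(c / r ^ 2)) r := by
      have := (hasDerivAt_inv hr.ne').const_mul c
      simpa [div_eq_mul_inv, mul_comm, mul_left_comm, neg_mul, mul_neg] using this
    have harc := ((Real.hasDerivAt_arctan (c / r)).comp r hin).const_mul (2 * M)
    refine harc.congr_deriv ?_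
    have h1 : (1 + (c / r) ^ 2) ≠ 0 := by positivity
    field_simp
  have hsum := (((h1.add h2).add h3).add h4).sub_const (2 * M * Real.arctan (c / p))
  have hfun : (fun r : ℝ => 2 * (r - p) + 4 * M * Real.log (r / p)
      + 3 * M ^ 2 * (p - r) ^ 2 / (p * r ^ 2) + 2 * M * Real.arctan (c / r)
      - 2 * M * Real.arctan (c / p)) = hKerr M a Cc := by
    funext x
    simp only [hKerr, ← hpdef, ← hcdef]
  exact hsum.congr_deriv (by ring)

/-- Basic properties of the height function: it vanishes at the horizon, is monotone
nondecreasing (hence nonnegative) for `r ≥ r₊`, and `h(r)/r → 2` as `r → ∞`. -/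
theorem hKerr_basic_properties (M a Cc : ℝ) (hM : 0 < M) (ha : |a| < M) (hCc : 1 ≤ Cc) :
    hKerr M a Cc (rplus M a) = 0 ∧
    MonotoneOn (hKerr M a Cc) (Set.Ici (rplus M a)) ∧
    (∀ r, rplus M a ≤ r → 0 ≤ hKerr M a Cc r) ∧
    Filter.Tendsto (fun r => hKerr M a Cc r / r) Filter.atTop (nhds 2) := by
  have hp : 0 < rplus M a := rplus_pos hM
  set p := rplus M a with hpdef
  have hzero : hKerr M a Cc p = 0 := by
    simp [hKerr, ← hpdef, div_self hp.ne']
  have hmono : MonotoneOn (hKerr M a Cc) (Set.Ici p) := by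
    apply monotoneOn_of_deriv_nonneg (convex_Ici p)
    · intro r hr
      exact (hKerr_hasDerivAt M a Cc hM (hp.trans_le hr)).continuousAt.continuousWithinAt
    · intro r hr
      rw [interior_Ici] at hr
      exact (hKerr_hasDerivAt M a Cc hM (hp.trans hr)).differentiableAt.differentiableWithinAt
    · intro r hr
      rw [interior_Ici] at hr
      have hr0 : 0 < r := hp.trans hr
      rw [(hKerr_hasDerivAt M a Cc hM hr0).deriv]
      have hc : 0 ≤ (Cc - 1) * M := mul_nonneg (by linarith) hM.le
      set c := (Cc - 1) * M with hcdef
      have key : 2 * M * c / (r ^ 2 + c ^ 2) ≤ M / r := by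
        rw [div_le_div_iff₀ (by positivity) hr0]
        nlinarith [sq_nonneg (r - c)]
      have t1 : 0 ≤ 6 * M ^ 2 * (r - p) / r ^ 3 := by
        apply div_nonneg _ (by positivity)
        nlinarith [(show p < r from hr).le]
      have t2 : M / r ≤ 4 * M / r := by
        rw [div_le_div_iff₀ hr0 hr0]; nlinarith
      linarith
  refine ⟨hzero, hmono, fun r hr => ?_, ?_⟩
  · have := hmono Set.self_mem_Ici hr hr
    linarith [hzero ▸ this]
  · set c := (Cc - 1) * M with hcdef
    set K := 2 * M * Real.arctan (c / p) with hKdef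
    have hA : Tendsto (fun r : ℝ => (-(2 * p) - K) / r) atTop (nhds 0) :=
      tendsto_const_nhds.div_atTop tendsto_id
    have hB : Tendsto (fun r : ℝ => 4 * M * Real.log (r / p) / r) atTop (nhds 0) := by
      have hlog : Tendsto (fun r : ℝ => Real.log r / r) atTop (nhds 0) :=
        Real.isLittleO_log_id_atTop.tendsto_div_nhds_zero
      have hlogp : Tendsto (fun r : ℝ => Real.log p / r) atTop (nhds 0) :=
        tendsto_const_nhds.div_atTop tendsto_id
      have h := ((hlog.sub hlogp).const_mul (4 * M))
      rw [sub_zero, mul_zero] at h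
      apply h.congr'
      filter_upwards [eventually_gt_atTop (0 : ℝ)] with r hr
      rw [Real.log_div hr.ne' hp.ne']; ring
    have hC : Tendsto (fun r : ℝ => 3 * M ^ 2 * (p - r) ^ 2 / (p * r ^ 2) / r) atTop (nhds 0) := by
      have h1 : Tendsto (fun r : ℝ => 3 * M ^ 2 * (p / r - 1) ^ 2 / p) atTop
          (nhds (3 * M ^ 2 * ((0 : ℝ) - 1) ^ 2 / p)) := by
        apply Tendsto.div_const
        apply Tendsto.const_mul
        exact ((tendsto_const_nhds.div_atTop tendsto_id).sub tendsto_const_nhds).pow 2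
      have h := h1.div_atTop tendsto_id
      apply h.congr'
      filter_upwards [eventually_gt_atTop (0 : ℝ)] with r hr
      simp only [id_eq]
      have e1 : p / r - 1 = (p - r) / r := by
        rw [sub_div, div_self hr.ne']
      rw [e1, div_pow]
      ring
    have hD : Tendsto (fun r : ℝ => 2 * M * Real.arctan (c / r) / r) atTop (nhds 0) := by
      have harc : Tendsto (fun r : ℝ => 2 * M * Real.arctan (c / r)) atTop
          (nhds (2 * M * Real.arctan 0)) :=
        ((Real.continuous_arctan.tendsto 0).comp (tendsto_const_nhds.div_atTop tendsto_id)).const_mul _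
      exact harc.div_atTop tendsto_id
    have hsum := ((((hA.add hB).add hC).add hD).add_const 2)
    simp only [add_zero, zero_add] at hsum
    apply hsum.congr'
    filter_upwards [eventually_gt_atTop (0 : ℝ)] with r hr
    have hexp : hKerr M a Cc r = ((-(2 * p) - K) + 4 * M * Real.log (r / p)
        + 3 * M ^ 2 * (p - r) ^ 2 / (p * r ^ 2) + 2 * M * Real.arctan (c / r)) + 2 * r := by
      simp only [hKerr, ← hpdef, ← hcdef, ← hKdef]; ring
    rw [hexp, add_div, add_div, add_div, add_div]
    congr 1
    field_simp
end

section
/- For every r > r₊, h′(r) < 2(a² + r²)/Δ(r) − a²/(a² + r²). -/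
set_option maxHeartbeats 1000000 in
/-- Strict upper bound `h′(r) < 2(a² + r²)/Δ(r) − a²/(a² + r²)` for `r > r₊`,
where `Δ(r) = r² − 2Mr + a²`. -/
theorem hKerr_deriv_upper_bound (M a Cc : ℝ) (hM : 0 < M) (ha : |a| < M) (hCc : 1 ≤ Cc) :
    ∀ r, rplus M a < r →
      deriv (hKerr M a Cc) r
        < 2 * (a ^ 2 + r ^ 2) / (r ^ 2 - 2 * M * r + a ^ 2) - a ^ 2 / (a ^ 2 + r ^ 2) := by
  intro r hr
  set s := rplus M a with hs
  set k : ℝ := (Cc - 1) * M with hk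
  have ha1 := abs_lt.mp ha
  have ha2 : a ^ 2 < M ^ 2 := by nlinarith [ha1.1, ha1.2]
  have hsqrt : 0 < Real.sqrt (M ^ 2 - a ^ 2) := Real.sqrt_pos.mpr (by linarith)
  have hsM : M < s := by rw [hs, rplus]; linarith
  have hs2M : s ≤ 2 * M := by
    have h1 : Real.sqrt (M ^ 2 - a ^ 2) ≤ M := by
      have h2 := Real.sqrt_le_sqrt (show M ^ 2 - a ^ 2 ≤ M ^ 2 by nlinarith [sq_nonneg a])
      rwa [Real.sqrt_sq hM.le] at h2
    rw [hs, rplus]; linarith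
  have hseq : a ^ 2 = 2 * M * s - s ^ 2 := by
    have h1 : (s - M) ^ 2 = M ^ 2 - a ^ 2 := by
      rw [hs, rplus, add_sub_cancel_left]
      exact Real.sq_sqrt (by linarith)
    nlinarith [h1]
  have hspos : 0 < s := lt_trans hM hsM
  have hrpos : 0 < r := lt_trans hspos hr
  have hrne : r ≠ 0 := hrpos.ne'
  have hsne : s ≠ 0 := hspos.ne'
  have hknn : 0 ≤ k := mul_nonneg (by linarith) hM.le
  have hrk : (0:ℝ) < r ^ 2 + k ^ 2 := by positivity
  have hΔeq : r ^ 2 - 2 * M * r + a ^ 2 = (r - s) * (r + s - 2 * M) := by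
    rw [hseq]; ring
  have hΔpos : 0 < r ^ 2 - 2 * M * r + a ^ 2 := by
    rw [hΔeq]
    exact mul_pos (by linarith) (by linarith)
  -- derivative pieces
  have hd1 : HasDerivAt (fun x : ℝ => 2 * (x - s)) 2 r := by
    simpa using ((hasDerivAt_id r).sub_const s).const_mul 2
  have hlog0 : HasDerivAt (fun x : ℝ => x / s) (1 / s) r := by
    simpa using (hasDerivAt_id r).div_const s
  have hd2 : HasDerivAt (fun x : ℝ => 4 * M * Real.log (x / s))
      (4 * M * ((r / s)⁻¹ * (1 / s))) r := by
    have h1 : r / s ≠ 0 := div_ne_zero hrne hsne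
    exact ((Real.hasDerivAt_log h1).comp r hlog0).const_mul (4 * M)
  have hu : HasDerivAt (fun x : ℝ => 3 * M ^ 2 * (s - x) ^ 2)
      (3 * M ^ 2 * ((2 : ℕ) * (s - r) ^ 1 * (-1))) r := by
    have h0 : HasDerivAt (fun x : ℝ => s - x) (-1) r := by
      simpa using (hasDerivAt_id r).const_sub s
    exact (h0.pow 2).const_mul (3 * M ^ 2)
  have hv : HasDerivAt (fun x : ℝ => s * x ^ 2) (s * ((2 : ℕ) * r ^ 1)) r := by
    have h0 : HasDerivAt (fun x : ℝ => x ^ 2) ((2 : ℕ) * r ^ 1) r := by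
      simpa using hasDerivAt_pow 2 r
    exact h0.const_mul s
  have hvne : s * r ^ 2 ≠ 0 := by positivity
  have hd3 := hu.div hv hvne
  have harct : HasDerivAt (fun x : ℝ => k / x) ((0 * r - k * 1) / r ^ 2) r :=
    (hasDerivAt_const r k).div (hasDerivAt_id r) hrne
  have hd4 : HasDerivAt (fun x : ℝ => 2 * M * Real.arctan (k / x))
      (2 * M * (1 / (1 + (k / r) ^ 2) * ((0 * r - k * 1) / r ^ 2))) r := by
    exact ((Real.hasDerivAt_arctan (k / r)).comp r harct).const_mul (2 * M)
  have hfun : hKerr M a Cc = fun x : ℝ =>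
      2 * (x - s) + 4 * M * Real.log (x / s) + 3 * M ^ 2 * (s - x) ^ 2 / (s * x ^ 2)
        + 2 * M * Real.arctan (k / x) - 2 * M * Real.arctan (k / s) := by
    funext x
    simp only [hKerr, hs, hk]
  have hone : (1 : ℝ) + (k / r) ^ 2 ≠ 0 := by positivity
  have hderiv : deriv (hKerr M a Cc) r
      = 2 + 4 * M / r + 6 * M ^ 2 * (r - s) / r ^ 3 - 2 * M * k / (r ^ 2 + k ^ 2) := by
    have hD0 := (((hd1.add hd2).add hd3).add hd4).sub_const (2 * M * Real.arctan (k / s))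
    rw [hfun]
    erw [hD0.deriv]
    field_simp
    ring
  -- the arctan contribution is nonpositive
  have hstep1 : deriv (hKerr M a Cc) r ≤ 2 + 4 * M / r + 6 * M ^ 2 * (r - s) / r ^ 3 := by
    rw [hderiv]
    have h1 : 0 ≤ 2 * M * k / (r ^ 2 + k ^ 2) := by positivity
    linarith
  -- polynomial inequality
  have hc : 0 < 6 * M ^ 2 * (r - s) + a ^ 2 * r := by nlinarith [sq_nonneg a]
  have hΔlt : r ^ 2 - 2 * M * r + a ^ 2 < r ^ 2 := by nlinarith
  have e1 : (6 * M ^ 2 * (r - s) + a ^ 2 * r) * (r ^ 2 - 2 * M * r + a ^ 2)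
      < (6 * M ^ 2 * (r - s) + a ^ 2 * r) * r ^ 2 :=
    mul_lt_mul_of_pos_left hΔlt hc
  have e2 : (6 * M ^ 2 * (r - s) + a ^ 2 * r) * r ^ 2
      < 8 * M ^ 2 * r ^ 3 - 4 * M * a ^ 2 * r ^ 2 := by
    nlinarith [mul_pos (sub_pos.mpr ha2) (pow_pos hrpos 3),
      mul_nonneg (mul_nonneg (by linarith : (0:ℝ) ≤ 4 * M) (sub_pos.mpr ha2).le) (sq_nonneg r),
      mul_pos (mul_pos (sub_pos.mpr hsM) (mul_pos hM hM)) (pow_pos hrpos 2),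
      mul_pos (mul_pos hM hM) (pow_pos hrpos 3)]
  have key : (2 * r ^ 3 + 4 * M * r ^ 2 + 6 * M ^ 2 * (r - s) + a ^ 2 * r)
      * (r ^ 2 - 2 * M * r + a ^ 2) < 2 * (a ^ 2 + r ^ 2) * r ^ 3 := by
    have id1 : 2 * (a ^ 2 + r ^ 2) * r ^ 3
        = (2 * r ^ 3 + 4 * M * r ^ 2) * (r ^ 2 - 2 * M * r + a ^ 2)
          + (8 * M ^ 2 * r ^ 3 - 4 * M * a ^ 2 * r ^ 2) := by ring
    have id2 : (2 * r ^ 3 + 4 * M * r ^ 2 + 6 * M ^ 2 * (r - s) + a ^ 2 * r)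
        * (r ^ 2 - 2 * M * r + a ^ 2)
        = (2 * r ^ 3 + 4 * M * r ^ 2) * (r ^ 2 - 2 * M * r + a ^ 2)
          + (6 * M ^ 2 * (r - s) + a ^ 2 * r) * (r ^ 2 - 2 * M * r + a ^ 2) := by ring
    linarith [e1, e2]
  have hmid : 2 + 4 * M / r + 6 * M ^ 2 * (r - s) / r ^ 3
      < 2 * (a ^ 2 + r ^ 2) / (r ^ 2 - 2 * M * r + a ^ 2) - a ^ 2 / r ^ 2 := by
    have hL : 2 + 4 * M / r + 6 * M ^ 2 * (r - s) / r ^ 3 + a ^ 2 / r ^ 2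
        = (2 * r ^ 3 + 4 * M * r ^ 2 + 6 * M ^ 2 * (r - s) + a ^ 2 * r) / r ^ 3 := by
      field_simp
    have h2 : (2 * r ^ 3 + 4 * M * r ^ 2 + 6 * M ^ 2 * (r - s) + a ^ 2 * r) / r ^ 3
        < 2 * (a ^ 2 + r ^ 2) / (r ^ 2 - 2 * M * r + a ^ 2) :=
      (div_lt_div_iff₀ (pow_pos hrpos 3) hΔpos).mpr key
    rw [← hL] at h2
    linarith [h2]
  have hlast : a ^ 2 / (a ^ 2 + r ^ 2) ≤ a ^ 2 / r ^ 2 := by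
    apply div_le_div_of_nonneg_left (sq_nonneg a) (by positivity)
    nlinarith [sq_nonneg a]
  linarith [hstep1, hmid, hlast]
end

section
/- Fix M > 0 and a ∈ ℝ with |a| < M, and set r₊ = M + √(M² − a²) and Δ(r) = r² − 2Mr + a². Then for every r > r₊, 2(a² + r²)/Δ(r) − a²/(a² + r²) − 2 − 4M/r − 6M²/r² > 0. -/
/-!
Since `a² + r² = Δ + 2Mr`, the first two terms of `J` combine to `4Mr/Δ`. On the exterior
`0 < Δ = (r - M)² - (M² - a²) ≤ (r - M)²` and `a²/(a² + r²) ≤ M²/r²`, so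
`J ≥ 4Mr/(r - M)² - 4M/r - 7M²/r² = M² (r² + 10Mr - 7M²) / (r² (r - M)²)`, which is positive for
`0 < M < r`.
-/

namespace Kerr

def delta (M a r : ℝ) : ℝ := r ^ 2 - 2 * M * r + a ^ 2

variable {M a r : ℝ}

theorem delta_eq_sq_sub (M a r : ℝ) : delta M a r = (r - M) ^ 2 - (M ^ 2 - a ^ 2) := by
  unfold delta; ring

theorem delta_pos (hr : M + √(M ^ 2 - a ^ 2) < r) : 0 < delta M a r := by
  have hsqrt : √(M ^ 2 - a ^ 2) < r - M := by linarith
  have hrM : 0 < r - M := (Real.sqrt_nonneg _).trans_lt hsqrt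
  rw [delta_eq_sq_sub, sub_pos]
  exact (Real.sqrt_lt' hrM).mp hsqrt

theorem delta_le_sq (ha : a ^ 2 ≤ M ^ 2) : delta M a r ≤ (r - M) ^ 2 := by
  rw [delta_eq_sq_sub]; linarith

theorem two_mul_div_delta_sub_two (hΔ : delta M a r ≠ 0) :
    2 * (a ^ 2 + r ^ 2) / delta M a r - 2 = 4 * M * r / delta M a r := by
  rw [sub_eq_iff_eq_add, div_add' _ _ _ hΔ]
  congr 1
  unfold delta; ring

end Kerr

theorem sq_div_sq_add_sq_le {a b r : ℝ} (hab : a ^ 2 ≤ b ^ 2) (hr : r ≠ 0) :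
    a ^ 2 / (a ^ 2 + r ^ 2) ≤ b ^ 2 / r ^ 2 := by
  have hr2 : 0 < r ^ 2 := by positivity
  calc a ^ 2 / (a ^ 2 + r ^ 2) ≤ a ^ 2 / r ^ 2 :=
        div_le_div_of_nonneg_left (sq_nonneg a) hr2 (le_add_of_nonneg_left (sq_nonneg a))
    _ ≤ b ^ 2 / r ^ 2 := div_le_div_of_nonneg_right hab hr2.le

theorem four_mul_div_sq_sub_sub_pos {M r : ℝ} (hM : 0 < M) (hMr : M < r) :
    0 < 4 * M * r / (r - M) ^ 2 - 4 * M / r - 7 * M ^ 2 / r ^ 2 := by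
  have hr : 0 < r := hM.trans hMr
  have hrM : r - M ≠ 0 := (sub_pos.mpr hMr).ne'
  have hform : 4 * M * r / (r - M) ^ 2 - 4 * M / r - 7 * M ^ 2 / r ^ 2
      = M ^ 2 * (r ^ 2 + 10 * M * r - 7 * M ^ 2) / (r ^ 2 * (r - M) ^ 2) := by
    field_simp
    ring
  rw [hform]
  have hquad : 0 < r ^ 2 + 10 * M * r - 7 * M ^ 2 := by nlinarith
  positivity

open Kerr in
theorem J_positive_general (M a : ℝ) (ha : |a| < M) :
    ∀ r : ℝ, M + Real.sqrt (M ^ 2 - a ^ 2) < r →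
      0 < 2 * (a ^ 2 + r ^ 2) / (r ^ 2 - 2 * M * r + a ^ 2) - a ^ 2 / (a ^ 2 + r ^ 2)
          - 2 - 4 * M / r - 6 * M ^ 2 / r ^ 2 := by
  intro r hr
  change 0 < 2 * (a ^ 2 + r ^ 2) / delta M a r - a ^ 2 / (a ^ 2 + r ^ 2)
    - 2 - 4 * M / r - 6 * M ^ 2 / r ^ 2
  have hM : 0 < M := (abs_nonneg a).trans_lt ha
  have haM : a ^ 2 ≤ M ^ 2 := (sq_lt_sq' (abs_lt.mp ha).1 (abs_lt.mp ha).2).le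
  have hMr : M < r := (le_add_of_nonneg_right (Real.sqrt_nonneg _)).trans_lt hr
  have hΔ : 0 < delta M a r := delta_pos hr
  have hΔ_le : 4 * M * r / (r - M) ^ 2 ≤ 4 * M * r / delta M a r :=
    div_le_div_of_nonneg_left (by nlinarith) hΔ (delta_le_sq haM)
  have hfrac : a ^ 2 / (a ^ 2 + r ^ 2) ≤ M ^ 2 / r ^ 2 :=
    sq_div_sq_add_sq_le haM (hM.trans hMr).ne'
  have hcombine := two_mul_div_delta_sub_two hΔ.ne'
  have hbound := four_mul_div_sq_sub_sub_pos hM hMr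
  have hsplit : 7 * M ^ 2 / r ^ 2 = M ^ 2 / r ^ 2 + 6 * M ^ 2 / r ^ 2 := by ring
  linarith

/-- Positivity of the quantity `J = 2(a²+r²)/Δ − a²/(a²+r²) − 2 − 4M/r − 6M²/r²`
on the Kerr exterior `r > r₊ = M + √(M² − a²)`, where `Δ(r) = r² − 2Mr + a²`. -/
theorem J_positive (M a : ℝ) (hM : 0 < M) (ha : |a| < M) :
    ∀ r : ℝ, M + Real.sqrt (M ^ 2 - a ^ 2) < r →
      0 < 2 * (a ^ 2 + r ^ 2) / (r ^ 2 - 2 * M * r + a ^ 2) - a ^ 2 / (a ^ 2 + r ^ 2)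
          - 2 - 4 * M / r - 6 * M ^ 2 / r ^ 2 :=
  J_positive_general M a ha
end

section
/- The function k = h/2 satisfies: (i) for every r ≥ r₊, k′(r) > a²/(a² + r²); (ii) for every r > r₊, k′(r) < 2(a² + r²)/Δ(r) − a²/(a² + r²); and (iii) there exist constants B > 0 and R0 > r₊ such that |k′(r) − (a² + r²)/Δ(r)| ≤ B/r² for all r ≥ R0. -/
lemma rplus_facts (M a : ℝ) (hM : 0 < M) (ha : |a| < M) :
    M < rplus M a ∧ rplus M a ≤ 2*M ∧
      (rplus M a)^2 - 2*M*(rplus M a) + a^2 = 0 := by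
  have ha2 : a^2 < M^2 := by
    have := abs_nonneg a
    nlinarith [sq_abs a]
  have hnn : (0:ℝ) ≤ M^2 - a^2 := by linarith
  have hs : Real.sqrt (M^2 - a^2) ^ 2 = M^2 - a^2 := Real.sq_sqrt hnn
  have hs0 : 0 < Real.sqrt (M^2 - a^2) := Real.sqrt_pos.mpr (by linarith)
  have hsM : Real.sqrt (M^2 - a^2) ≤ M := by
    have h1 : Real.sqrt (M^2 - a^2) ≤ Real.sqrt (M^2) := Real.sqrt_le_sqrt (by nlinarith)
    rwa [Real.sqrt_sq hM.le] at h1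
  refine ⟨by simp [rplus]; linarith, by simp [rplus]; linarith, ?_⟩
  simp only [rplus]
  nlinarith [hs]

lemma hasDerivAt_hKerr (M a Cc : ℝ) (r : ℝ) (hr : 0 < r) (hrp : 0 < rplus M a) :
    HasDerivAt (fun x => hKerr M a Cc x)
      (2 + 4*M/r + 6*M^2*(r - rplus M a)/r^3
        - 2*M*((Cc-1)*M)/(r^2 + ((Cc-1)*M)^2)) r := by
  set rp := rplus M a with hrpdef
  set c := (Cc - 1) * M with hcdef
  have h1 : HasDerivAt (fun x : ℝ => 2*(x - rp)) 2 r := by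
    simpa using ((hasDerivAt_id r).sub_const rp).const_mul 2
  have h2 : HasDerivAt (fun x : ℝ => 4*M*Real.log (x/rp)) (4*M/r) r := by
    have hinner : HasDerivAt (fun x : ℝ => x / rp) (1/rp) r := (hasDerivAt_id r).div_const rp
    have hlog := (Real.hasDerivAt_log (by positivity : r/rp ≠ 0)).comp r hinner
    have := hlog.const_mul (4*M)
    refine this.congr_deriv ?_
    field_simp
  have h3 : HasDerivAt (fun x : ℝ => 3*M^2*(rp - x)^2 / (rp * x^2))
      (6*M^2*(r - rp)/r^3) r := by
    have hu : HasDerivAt (fun x : ℝ => 3*M^2*(rp - x)^2) (3*M^2*(2*(rp-r)^1*(-1))) r := by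
      exact (((hasDerivAt_id r).const_sub rp).pow 2).const_mul (3*M^2)
        |>.congr_deriv (by simp only [id_eq]; ring)
    have hv : HasDerivAt (fun x : ℝ => rp * x^2) (rp*(2*r^1)) r := by
      simpa using ((hasDerivAt_pow 2 r).const_mul rp)
    have hne : rp * r^2 ≠ 0 := by positivity
    have := hu.div hv hne
    refine this.congr_deriv ?_
    field_simp
    ring
  have h4 : HasDerivAt (fun x : ℝ => 2*M*Real.arctan (c/x))
      (-(2*M*c/(r^2 + c^2))) r := by
    have hinner : HasDerivAt (fun x : ℝ => c / x) (-(c/r^2)) r := by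
      have := (hasDerivAt_inv hr.ne').const_mul c
      simpa [div_eq_mul_inv] using this.congr_deriv (by ring)
    have harc := (Real.hasDerivAt_arctan (c/r)).comp r hinner
    have := harc.const_mul (2*M)
    refine this.congr_deriv ?_
    have h1 : (1:ℝ) + (c/r)^2 > 0 := by positivity
    field_simp
  have H := (((h1.add h2).add h3).add h4).sub_const (2*M*Real.arctan (c/rp))
  exact H.congr_deriv (by ring)

lemma deriv_kKerr (M a Cc : ℝ) (r : ℝ) (hr : 0 < r) (hrp : 0 < rplus M a) :
    deriv (fun x => hKerr M a Cc x / 2) r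
      = 1 + 2*M/r + 3*M^2*(r - rplus M a)/r^3
        - M*((Cc-1)*M)/(r^2 + ((Cc-1)*M)^2) := by
  have H := (hasDerivAt_hKerr M a Cc r hr hrp).div_const 2
  rw [H.deriv]
  ring

set_option maxHeartbeats 1600000 in
/-- Properties of the horizon-crossing height function `k = h/2`: the two-sided
spacelikeness bounds for `k′` and the asymptotics `k′(r) − (a² + r²)/Δ(r) = O(r⁻²)`,
where `Δ(r) = r² − 2Mr + a²`. -/
theorem kKerr_properties (M a Cc : ℝ) (hM : 0 < M) (ha : |a| < M) (hCc : 1 ≤ Cc) :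
    (∀ r, rplus M a ≤ r →
      a ^ 2 / (a ^ 2 + r ^ 2) < deriv (fun x => hKerr M a Cc x / 2) r) ∧
    (∀ r, rplus M a < r →
      deriv (fun x => hKerr M a Cc x / 2) r
        < 2 * (a ^ 2 + r ^ 2) / (r ^ 2 - 2 * M * r + a ^ 2) - a ^ 2 / (a ^ 2 + r ^ 2)) ∧
    ∃ B > 0, ∃ R0 > rplus M a, ∀ r, R0 ≤ r →
      |deriv (fun x => hKerr M a Cc x / 2) r
        - (a ^ 2 + r ^ 2) / (r ^ 2 - 2 * M * r + a ^ 2)| ≤ B / r ^ 2 := by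
  obtain ⟨hMrp, hrp2M, hkey⟩ := rplus_facts M a hM ha
  have hrp0 : 0 < rplus M a := lt_trans hM hMrp
  have ha2 : a^2 < M^2 := by
    have := abs_nonneg a
    nlinarith [sq_abs a]
  have hc0 : 0 ≤ (Cc-1)*M := mul_nonneg (by linarith) hM.le
  refine ⟨?_, ?_, ?_⟩
  · -- part (i)
    intro r hr
    have hr0 : 0 < r := lt_of_lt_of_le hrp0 hr
    rw [deriv_kKerr M a Cc r hr0 hrp0]
    have hb1 : M*((Cc-1)*M)/(r^2 + ((Cc-1)*M)^2) ≤ M/(2*r) := by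
      rw [div_le_div_iff₀ (by positivity) (by positivity)]
      nlinarith [mul_nonneg hM.le (sq_nonneg (r - (Cc-1)*M))]
    have hb2 : 0 ≤ 3*M^2*(r - rplus M a)/r^3 :=
      div_nonneg (by nlinarith) (by positivity)
    have heq : 2*M/r - M/(2*r) = 3*M/(2*r) := by ring
    have h3p : 0 < 3*M/(2*r) := by positivity
    have ha1 : a^2/(a^2 + r^2) < 1 := by
      rw [div_lt_one (by positivity)]
      nlinarith [sq_nonneg r, pow_pos hr0 2]
    linarith
  · -- part (ii)
    intro r hr
    have hr0 : 0 < r := lt_trans hrp0 hr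
    have hΔ : 0 < r^2 - 2*M*r + a^2 := by
      nlinarith [mul_pos (sub_pos.mpr hr) (show (0:ℝ) < r + rplus M a - 2*M by linarith)]
    rw [deriv_kKerr M a Cc r hr0 hrp0]
    have hb3 : 0 ≤ M*((Cc-1)*M)/(r^2 + ((Cc-1)*M)^2) :=
      div_nonneg (mul_nonneg hM.le hc0) (by positivity)
    have ha1 : a^2/(a^2 + r^2) < 1 := by
      rw [div_lt_one (by positivity)]
      nlinarith [pow_pos hr0 2]
    have he : 2*(a^2 + r^2)/(r^2 - 2*M*r + a^2) = 2 + 4*M*r/(r^2 - 2*M*r + a^2) := by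
      have hne := hΔ.ne'
      generalize hD : r^2 - 2*M*r + a^2 = D at hne ⊢
      field_simp
      subst hD
      ring
    have hmain : 2*M/r + 3*M^2*(r - rplus M a)/r^3 ≤ 4*M*r/(r^2 - 2*M*r + a^2) := by
      have hc2 : 2*M/r + 3*M^2*(r - rplus M a)/r^3
          = (2*M*r^2 + 3*M^2*(r - rplus M a))/r^3 := by
        field_simp
      rw [hc2, div_le_div_iff₀ (by positivity) hΔ]
      have step1 : (2*M*r^2 + 3*M^2*(r - rplus M a))*(r^2 - 2*M*r + a^2)
          ≤ (2*M*r^2 + 3*M^2*(r - M))*(r^2 - 2*M*r + a^2) := by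
        nlinarith [mul_nonneg (mul_nonneg (mul_nonneg hM.le hM.le)
          (show (0:ℝ) ≤ rplus M a - M by linarith)) hΔ.le]
      have hA : 0 ≤ 2*M*r^2 + 3*M^2*(r - M) := by
        nlinarith [mul_pos hM (mul_pos hr0 hr0),
          mul_nonneg (mul_nonneg hM.le hM.le) (show (0:ℝ) ≤ r - M by linarith)]
      have step2 : (2*M*r^2 + 3*M^2*(r - M))*(r^2 - 2*M*r + a^2)
          ≤ (2*M*r^2 + 3*M^2*(r - M))*(r - M)^2 := by
        nlinarith [mul_nonneg hA (show (0:ℝ) ≤ M^2 - a^2 by linarith)]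
      have step3 : (2*M*r^2 + 3*M^2*(r - M))*(r - M)^2 ≤ 4*M*r*r^3 := by
        have h4M : 4*M*(r - M) ≤ r^2 := by nlinarith [sq_nonneg (r - 2*M)]
        have hrM2 : (r - M)^2 ≤ r^2 := by nlinarith
        nlinarith [mul_nonneg (mul_nonneg hM.le (sq_nonneg (r - M))) (sub_nonneg.mpr h4M),
          mul_nonneg (mul_nonneg hM.le (mul_pos hr0 hr0).le) (sub_nonneg.mpr hrM2)]
      linarith
    linarith
  · -- part (iii)
    refine ⟨(Cc + 11)*M^2, by nlinarith [pow_pos hM 2], rplus M a + 8*M, by linarith, ?_⟩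
    intro r hr
    have hr8 : 8*M ≤ r := by linarith
    have hrpr : rplus M a < r := by linarith
    have hr0 : 0 < r := by linarith
    have hΔ : 0 < r^2 - 2*M*r + a^2 := by
      nlinarith [mul_pos (sub_pos.mpr hrpr) (show (0:ℝ) < r + rplus M a - 2*M by linarith)]
    rw [deriv_kKerr M a Cc r hr0 hrp0]
    have hdiff : 1 + 2*M/r + 3*M^2*(r - rplus M a)/r^3
          - M*((Cc-1)*M)/(r^2 + ((Cc-1)*M)^2)
          - (a^2 + r^2)/(r^2 - 2*M*r + a^2)
        = 2*M*(a^2 - 2*M*r)/(r*(r^2 - 2*M*r + a^2))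
          + 3*M^2*(r - rplus M a)/r^3
          - M*((Cc-1)*M)/(r^2 + ((Cc-1)*M)^2) := by
      have hne := hΔ.ne'
      generalize hD : r^2 - 2*M*r + a^2 = D at hne ⊢
      field_simp
      subst hD
      ring
    rw [hdiff]
    have hT1le : 2*M*(a^2 - 2*M*r)/(r*(r^2 - 2*M*r + a^2)) ≤ 0 := by
      apply div_nonpos_of_nonpos_of_nonneg
      · nlinarith [mul_le_mul_of_nonneg_left hr8 hM.le]
      · positivity
    have hT1ge : (-(8*M^2))/r^2 ≤ 2*M*(a^2 - 2*M*r)/(r*(r^2 - 2*M*r + a^2)) := by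
      rw [div_le_div_iff₀ (by positivity) (by positivity)]
      nlinarith [mul_nonneg (mul_nonneg (mul_nonneg hM.le hM.le) (mul_pos hr0 hr0).le)
          (show (0:ℝ) ≤ r - 4*M by linarith),
        mul_nonneg (mul_nonneg hM.le (sq_nonneg a)) (mul_pos hr0 hr0).le,
        mul_nonneg (mul_nonneg (mul_nonneg hM.le hM.le) (sq_nonneg a)) hr0.le]
    have hT2ge : 0 ≤ 3*M^2*(r - rplus M a)/r^3 :=
      div_nonneg (by nlinarith) (by positivity)
    have hT2le : 3*M^2*(r - rplus M a)/r^3 ≤ 3*M^2/r^2 := by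
      rw [div_le_div_iff₀ (by positivity) (by positivity)]
      nlinarith [mul_nonneg (mul_nonneg (mul_nonneg (by norm_num : (0:ℝ) ≤ 3)
        (sq_nonneg M)) hrp0.le) (mul_pos hr0 hr0).le]
    have hT3ge : 0 ≤ M*((Cc-1)*M)/(r^2 + ((Cc-1)*M)^2) :=
      div_nonneg (mul_nonneg hM.le hc0) (by positivity)
    have hT3le : M*((Cc-1)*M)/(r^2 + ((Cc-1)*M)^2) ≤ (Cc-1)*M^2/r^2 := by
      rw [div_le_div_iff₀ (by positivity) (by positivity)]
      nlinarith [mul_nonneg (mul_nonneg (by linarith : (0:ℝ) ≤ Cc - 1) (sq_nonneg M))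
        (sq_nonneg ((Cc-1)*M))]
    rw [abs_le]
    have hsplit : (Cc + 11)*M^2/r^2 = 8*M^2/r^2 + (Cc-1)*M^2/r^2 + 4*M^2/r^2 := by ring
    have e8 : (-(8*M^2))/r^2 = -(8*M^2/r^2) := by ring
    have h4 : 0 ≤ 4*M^2/r^2 := by positivity
    have hsplit2 : (Cc + 11)*M^2/r^2 = 3*M^2/r^2 + (Cc+8)*M^2/r^2 := by ring
    have h5 : 0 ≤ (Cc+8)*M^2/r^2 :=
      div_nonneg (mul_nonneg (by linarith) (sq_nonneg M)) (by positivity)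
    constructor <;> linarith
end
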